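/- arXiv:2009.02543 — 9 statements merged into one kernel-verified Lean document; each statement's English description precedes it below -/
import Mathlib

section
/- Let C be a Hermitian self-orthogonal linear code of length 2n over F_{q^2} with generator matrix G = (G_1 | G_2), where G_1, G_2 are k×n blocks, and let C_1 be the code generated by G_1. If x is a vector in C_1^{⊥_h} with ⟨x,x⟩_h = p−1, where p is the characteristic of F_{q^2}, then the code C' of length 2n+1 generated by the rows (G_1 | G_2 | 0) together with the row (x | 0…0 | 1) is Hermitian self-orthogonal. -/
/-- Extending a Hermitian self-orthogonal quasi-cyclic code of length `2n` by one column
and the extra row `(x | 0…0 | 1)`, where `x ∈ C₁^{⊥h}` with `⟨x,x⟩_h = p - 1`, yields a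
Hermitian self-orthogonal code of length `2n + 1`. -/
theorem stmt3 {F : Type*} [Field F] [Fintype F] (q p n k : ℕ) [CharP F p]
    (hq : Fintype.card F = q ^ 2)
    (G1 G2 : Matrix (Fin k) (Fin n) F) (x : Fin n → F)
    (hso : ∀ u ∈ Submodule.span F (Set.range fun i => Fin.append (G1 i) (G2 i)),
      ∀ v ∈ Submodule.span F (Set.range fun i => Fin.append (G1 i) (G2 i)),
        ∑ t, u t ^ q * v t = 0)
    (hx : ∀ u ∈ Submodule.span F (Set.range fun i => G1 i), ∑ t, u t ^ q * x t = 0)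
    (hxx : ∑ t, x t ^ q * x t = (p : F) - 1) :
    ∀ u ∈ Submodule.span F (Set.range
        (Fin.snoc (fun i : Fin k =>
            Fin.append (Fin.append (G1 i) (G2 i)) (fun _ : Fin 1 => (0 : F)))
          (Fin.append (Fin.append x (0 : Fin n → F)) (fun _ : Fin 1 => (1 : F))))),
      ∀ v ∈ Submodule.span F (Set.range
        (Fin.snoc (fun i : Fin k =>
            Fin.append (Fin.append (G1 i) (G2 i)) (fun _ : Fin 1 => (0 : F)))
          (Fin.append (Fin.append x (0 : Fin n → F)) (fun _ : Fin 1 => (1 : F))))),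
        ∑ t, u t ^ q * v t = 0 := by
  have hp : p.Prime := CharP.char_is_prime F p
  haveI : Fact p.Prime := ⟨hp⟩
  obtain ⟨m, -, hm⟩ := FiniteField.card F p
  have hq0 : q ≠ 0 := by
    rintro rfl; simp at hq
  have hqdvd : q ∣ p ^ (m : ℕ) := ⟨q, by rw [← hm, hq]; ring⟩
  obtain ⟨j, hj, hqe⟩ := (Nat.dvd_prime_pow hp).mp hqdvd
  have hring : ∀ a b : F, (a + b) ^ q = a ^ q + b ^ q := by
    intro a b; rw [hqe]; exact add_pow_char_pow a b p j
  have hpow2 : ∀ a : F, (a ^ q) ^ q = a := by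
    intro a; rw [← pow_mul, ← sq, ← hq]; exact FiniteField.pow_card a
  have hφa : ∀ a : F, iterateFrobenius F p j a = a ^ q := by
    intro a; rw [iterateFrobenius_def, hqe]
  -- generator vs generator
  have hgen : ∀ a ∈ Set.range
      (Fin.snoc (fun i : Fin k =>
          Fin.append (Fin.append (G1 i) (G2 i)) (fun _ : Fin 1 => (0 : F)))
        (Fin.append (Fin.append x (0 : Fin n → F)) (fun _ : Fin 1 => (1 : F)))),
      ∀ b ∈ Set.range
      (Fin.snoc (fun i : Fin k =>
          Fin.append (Fin.append (G1 i) (G2 i)) (fun _ : Fin 1 => (0 : F)))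
        (Fin.append (Fin.append x (0 : Fin n → F)) (fun _ : Fin 1 => (1 : F)))),
      ∑ t, a t ^ q * b t = 0 := by
    rintro a ⟨i, rfl⟩ b ⟨l, rfl⟩
    induction i using Fin.lastCases with
    | last =>
      induction l using Fin.lastCases with
      | last =>
        simp only [Fin.snoc_last, Fin.sum_univ_add, Fin.append_left, Fin.append_right,
          Pi.zero_apply, zero_pow hq0, zero_mul, Finset.sum_const_zero, one_pow, mul_one,
          Finset.univ_unique, Finset.sum_singleton, add_zero, zero_add, hxx]
        rw [sub_add_cancel, CharP.cast_eq_zero]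
      | cast l' =>
        have h0 : ∑ t, G1 l' t ^ q * x t = 0 :=
          hx (G1 l') (Submodule.subset_span ⟨l', rfl⟩)
        have h1 : ∑ t, x t ^ q * G1 l' t = 0 := by
          have h2 := congrArg (iterateFrobenius F p j) h0
          rw [map_sum, map_zero] at h2
          calc ∑ t, x t ^ q * G1 l' t
              = ∑ t, iterateFrobenius F p j (G1 l' t ^ q * x t) := by
                refine Finset.sum_congr rfl fun t _ => ?_
                rw [hφa, mul_pow, hpow2, mul_comm]
            _ = 0 := h2
        simp only [Fin.snoc_last, Fin.snoc_castSucc, Fin.sum_univ_add, Fin.append_left,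
          Fin.append_right, Pi.zero_apply, zero_pow hq0, zero_mul, mul_zero,
          Finset.sum_const_zero, one_pow, Finset.univ_unique, Finset.sum_singleton,
          add_zero, zero_add, h1]
    | cast i' =>
      induction l using Fin.lastCases with
      | last =>
        have h0 : ∑ t, G1 i' t ^ q * x t = 0 :=
          hx (G1 i') (Submodule.subset_span ⟨i', rfl⟩)
        simp only [Fin.snoc_last, Fin.snoc_castSucc, Fin.sum_univ_add, Fin.append_left,
          Fin.append_right, Pi.zero_apply, zero_pow hq0, zero_mul, mul_zero,
          Finset.sum_const_zero, one_pow, Finset.univ_unique, Finset.sum_singleton,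
          add_zero, zero_add, h0]
      | cast l' =>
        have h := hso (Fin.append (G1 i') (G2 i')) (Submodule.subset_span ⟨i', rfl⟩)
          (Fin.append (G1 l') (G2 l')) (Submodule.subset_span ⟨l', rfl⟩)
        simp only [Fin.sum_univ_add, Fin.append_left, Fin.append_right] at h
        simp only [Fin.snoc_castSucc, Fin.sum_univ_add, Fin.append_left, Fin.append_right,
          zero_pow hq0, zero_mul, mul_zero, Finset.sum_const_zero, Finset.univ_unique,
          Finset.sum_singleton, add_zero, zero_add, h]
  -- span induction
  intro u hu
  induction hu using Submodule.span_induction with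
  | mem a ha =>
    intro v hv
    induction hv using Submodule.span_induction with
    | mem b hb => exact hgen a ha b hb
    | zero => simp
    | add b c _ _ ihb ihc =>
      simp only [Pi.add_apply, mul_add, Finset.sum_add_distrib, ihb, ihc, add_zero]
    | smul c b _ ihb =>
      have : ∑ t, a t ^ q * (c • b) t = c * ∑ t, a t ^ q * b t := by
        rw [Finset.mul_sum]
        exact Finset.sum_congr rfl fun t _ => by simp [smul_eq_mul]; ring
      rw [this, ihb, mul_zero]
  | zero => intro v hv; simp [zero_pow hq0]
  | add a b _ _ iha ihb =>
    intro v hv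
    have : ∑ t, (a + b) t ^ q * v t = (∑ t, a t ^ q * v t) + ∑ t, b t ^ q * v t := by
      rw [← Finset.sum_add_distrib]
      exact Finset.sum_congr rfl fun t _ => by
        simp only [Pi.add_apply, hring, add_mul]
    rw [this, iha v hv, ihb v hv, add_zero]
  | smul c a _ iha =>
    intro v hv
    have : ∑ t, (c • a) t ^ q * v t = c ^ q * ∑ t, a t ^ q * v t := by
      rw [Finset.mul_sum]
      exact Finset.sum_congr rfl fun t _ => by
        simp only [Pi.smul_apply, smul_eq_mul, mul_pow]; ring
    rw [this, iha v hv, mul_zero]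
end

section
/- Let C be a Hermitian self-orthogonal linear code of length 2n over F_{q^2} with generator matrix G = (G_1 | G_2), and let C_i be the code generated by G_i (i=1,2). If x^{(1)} ∈ C_1^{⊥_h} and x^{(2)} ∈ C_2^{⊥_h} satisfy ⟨x^{(i)},x^{(i)}⟩_h = p−1 for i = 1,2, where p = char(F_{q^2}), then the length-(2n+2) code C'' generated by the rows (G_1 | G_2 | 0 | 0), (x^{(1)} | 0 | 1 | 0), and (0 | x^{(2)} | 0 | 1) is Hermitian self-orthogonal. -/
private lemma herm_span {F : Type*} [Field F] (q : ℕ) (hq0 : q ≠ 0)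
    (hfrob : ∀ a b : F, (a + b) ^ q = a ^ q + b ^ q)
    {ι : Type*} [Fintype ι] (s : Set (ι → F))
    (h : ∀ u ∈ s, ∀ v ∈ s, ∑ t, u t ^ q * v t = 0) :
    ∀ u ∈ Submodule.span F s, ∀ v ∈ Submodule.span F s, ∑ t, u t ^ q * v t = 0 := by
  intro u hu
  induction hu using Submodule.span_induction with
  | mem x hx =>
    intro v hv
    induction hv using Submodule.span_induction with
    | mem y hy => exact h x hx y hy
    | zero => simp
    | add y z _ _ hy hz =>
      simp only [Pi.add_apply, mul_add, Finset.sum_add_distrib, hy, hz, add_zero]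
    | smul c y _ hy =>
      simp only [Pi.smul_apply, smul_eq_mul, mul_left_comm, ← Finset.mul_sum, hy, mul_zero]
  | zero => intro v hv; simp [zero_pow hq0]
  | add y z _ _ hy hz =>
    intro v hv
    simp only [Pi.add_apply, hfrob, add_mul, Finset.sum_add_distrib, hy v hv, hz v hv, add_zero]
  | smul c y _ hy =>
    intro v hv
    simp only [Pi.smul_apply, smul_eq_mul, mul_pow, mul_assoc, ← Finset.mul_sum, hy v hv,
      mul_zero]

private lemma herm_conj {F : Type*} [Field F] (q : ℕ) (hq0 : q ≠ 0)
    (hq2 : ∀ a : F, (a ^ q) ^ q = a)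
    {ι : Type*} [Fintype ι]
    (hsum : ∀ f : ι → F, (∑ t, f t) ^ q = ∑ t, f t ^ q)
    (u v : ι → F) (h : ∑ t, u t ^ q * v t = 0) : ∑ t, v t ^ q * u t = 0 := by
  have h2 : (∑ t, u t ^ q * v t) ^ q = 0 := by rw [h, zero_pow hq0]
  rw [hsum] at h2
  simp only [mul_pow, hq2] at h2
  rw [← h2]
  exact Finset.sum_congr rfl fun t _ => mul_comm _ _

private lemma herm_split {F : Type*} [Field F] (q n : ℕ) (a b a' b' : Fin n → F)
    (c c' : Fin 2 → F) :
    ∑ t : Fin (n + n + 2),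
        (Fin.append (Fin.append a b) c) t ^ q * (Fin.append (Fin.append a' b') c') t =
      (∑ t, a t ^ q * a' t) + (∑ t, b t ^ q * b' t) + (c 0 ^ q * c' 0 + c 1 ^ q * c' 1) := by
  rw [Fin.sum_univ_add]
  simp only [Fin.append_left, Fin.append_right]
  rw [Fin.sum_univ_add, Fin.sum_univ_two]
  simp only [Fin.append_left, Fin.append_right]

/-- Extending a Hermitian self-orthogonal code of length `2n` by two columns and the rows
`(x¹ | 0 | 1 | 0)` and `(0 | x² | 0 | 1)` with `xⁱ ∈ Cᵢ^{⊥h}` and `⟨xⁱ,xⁱ⟩_h = p - 1`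
yields a Hermitian self-orthogonal code of length `2n + 2`. -/
theorem stmt4 {F : Type*} [Field F] [Fintype F] (q p n k : ℕ) [CharP F p]
    (hq : Fintype.card F = q ^ 2)
    (G1 G2 : Matrix (Fin k) (Fin n) F) (x1 x2 : Fin n → F)
    (hso : ∀ u ∈ Submodule.span F (Set.range fun i => Fin.append (G1 i) (G2 i)),
      ∀ v ∈ Submodule.span F (Set.range fun i => Fin.append (G1 i) (G2 i)),
        ∑ t, u t ^ q * v t = 0)
    (hx1 : ∀ u ∈ Submodule.span F (Set.range fun i => G1 i), ∑ t, u t ^ q * x1 t = 0)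
    (hx2 : ∀ u ∈ Submodule.span F (Set.range fun i => G2 i), ∑ t, u t ^ q * x2 t = 0)
    (hxx1 : ∑ t, x1 t ^ q * x1 t = (p : F) - 1)
    (hxx2 : ∑ t, x2 t ^ q * x2 t = (p : F) - 1) :
    ∀ u ∈ Submodule.span F (Set.range
        (Fin.snoc (Fin.snoc (fun i : Fin k =>
              Fin.append (Fin.append (G1 i) (G2 i)) (fun _ : Fin 2 => (0 : F)))
            (Fin.append (Fin.append x1 (0 : Fin n → F)) ![(1 : F), 0]))
          (Fin.append (Fin.append (0 : Fin n → F) x2) ![(0 : F), 1]))),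
      ∀ v ∈ Submodule.span F (Set.range
        (Fin.snoc (Fin.snoc (fun i : Fin k =>
              Fin.append (Fin.append (G1 i) (G2 i)) (fun _ : Fin 2 => (0 : F)))
            (Fin.append (Fin.append x1 (0 : Fin n → F)) ![(1 : F), 0]))
          (Fin.append (Fin.append (0 : Fin n → F) x2) ![(0 : F), 1]))),
        ∑ t, u t ^ q * v t = 0 := by
  obtain ⟨m, hp, hcard⟩ := FiniteField.card F p
  haveI := Fact.mk hp
  obtain ⟨s, -, hqs⟩ := (Nat.dvd_prime_pow hp).mp
    (show q ∣ p ^ (m : ℕ) from hcard ▸ hq ▸ dvd_pow_self q two_ne_zero)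
  subst hqs
  have hq0 : p ^ s ≠ 0 := pow_ne_zero s hp.pos.ne'
  have hfrob : ∀ a b : F, (a + b) ^ p ^ s = a ^ p ^ s + b ^ p ^ s := fun a b =>
    add_pow_char_pow a b p s
  haveI : ExpChar F p := ExpChar.prime hp
  have hsum : ∀ {ι : Type} [Fintype ι] (f : ι → F),
      (∑ t, f t) ^ p ^ s = ∑ t, f t ^ p ^ s := by
    intro ι _ f
    simpa only [iterateFrobenius_def] using map_sum (iterateFrobenius F p s) f Finset.univ
  have hq2 : ∀ a : F, (a ^ p ^ s) ^ p ^ s = a := by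
    intro a
    have hcc : p ^ s * p ^ s = Fintype.card F := by rw [hq, sq]
    rw [← pow_mul, hcc, FiniteField.pow_card]
  have hso' : ∀ i j, (∑ t, G1 i t ^ p ^ s * G1 j t) + (∑ t, G2 i t ^ p ^ s * G2 j t) = 0 := by
    intro i j
    have h := hso _ (Submodule.subset_span ⟨i, rfl⟩) _ (Submodule.subset_span ⟨j, rfl⟩)
    rw [Fin.sum_univ_add] at h
    simpa only [Fin.append_left, Fin.append_right] using h
  have h1 : ∀ i, ∑ t, G1 i t ^ p ^ s * x1 t = 0 := fun i =>
    hx1 _ (Submodule.subset_span ⟨i, rfl⟩)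
  have h2 : ∀ i, ∑ t, G2 i t ^ p ^ s * x2 t = 0 := fun i =>
    hx2 _ (Submodule.subset_span ⟨i, rfl⟩)
  have h1' : ∀ i, ∑ t, x1 t ^ p ^ s * G1 i t = 0 := fun i =>
    herm_conj _ hq0 hq2 (fun f => hsum f) _ _ (h1 i)
  have h2' : ∀ i, ∑ t, x2 t ^ p ^ s * G2 i t = 0 := fun i =>
    herm_conj _ hq0 hq2 (fun f => hsum f) _ _ (h2 i)
  have hp0 : (p : F) = 0 := CharP.cast_eq_zero F p
  refine herm_span _ hq0 hfrob _ ?_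
  rintro _ ⟨i, rfl⟩ _ ⟨j, rfl⟩
  induction i using Fin.lastCases with
  | last =>
    induction j using Fin.lastCases with
    | last =>
      simp only [Fin.snoc_last, Fin.snoc_castSucc]
      rw [herm_split, hxx2]
      simp [zero_pow hq0, hp0]
    | cast j =>
      induction j using Fin.lastCases with
      | last =>
        simp only [Fin.snoc_last, Fin.snoc_castSucc]
        rw [herm_split]
        simp [zero_pow hq0]
      | cast j =>
        simp only [Fin.snoc_last, Fin.snoc_castSucc]
        rw [herm_split]
        simp [zero_pow hq0, h2' j]
  | cast i =>
    induction i using Fin.lastCases with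
    | last =>
      induction j using Fin.lastCases with
      | last =>
        simp only [Fin.snoc_last, Fin.snoc_castSucc]
        rw [herm_split]
        simp [zero_pow hq0]
      | cast j =>
        induction j using Fin.lastCases with
        | last =>
          simp only [Fin.snoc_last, Fin.snoc_castSucc]
          rw [herm_split, hxx1]
          simp [zero_pow hq0, hp0]
        | cast j =>
          simp only [Fin.snoc_last, Fin.snoc_castSucc]
          rw [herm_split]
          simp [zero_pow hq0, h1' j]
    | cast i =>
      induction j using Fin.lastCases with
      | last =>
        simp only [Fin.snoc_last, Fin.snoc_castSucc]
        rw [herm_split]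
        simp [zero_pow hq0, h2 i]
      | cast j =>
        induction j using Fin.lastCases with
        | last =>
          simp only [Fin.snoc_last, Fin.snoc_castSucc]
          rw [herm_split]
          simp [zero_pow hq0, h1 i]
        | cast j =>
          simp only [Fin.snoc_last, Fin.snoc_castSucc]
          rw [herm_split]
          simpa [zero_pow hq0] using hso' i j
end

section
/- Let C be a Hermitian self-orthogonal [n,k] code over F_{q^2} with Hermitian dual distance d^{⊥_h}, and let C' be the Hermitian self-orthogonal [n+1, k+1] extension obtained by appending a zero column to the generator matrix and adding one row with nonzero last coordinate. Then the Hermitian dual distance of C' satisfies d^{⊥_h} ≤ d(C'^{⊥_h}) ≤ d^{⊥_h} + 1. -/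
/-- Hamming weight of a vector. -/
def hwt {F : Type*} [Field F] [DecidableEq F] {n : ℕ} (v : Fin n → F) : ℕ :=
  (Finset.univ.filter fun i => v i ≠ 0).card

/-- The minimum Hamming weight of a nonzero codeword of the Hermitian dual of `C`. -/
noncomputable def hermDualDist {F : Type*} [Field F] [DecidableEq F] (q : ℕ) {n : ℕ}
    (C : Submodule F (Fin n → F)) : ℕ :=
  sInf {w | ∃ v : Fin n → F, v ≠ 0 ∧ (∀ u ∈ C, ∑ i, u i ^ q * v i = 0) ∧ hwt v = w}

/-!
Since `a ↦ a ^ q` is additive, Hermitian orthogonality to a code is orthogonality to its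
generators. Puncturing at the last coordinate therefore sends nonzero Hermitian dual vectors of
`C'` to nonzero Hermitian dual vectors of `C`: a dual vector of `C'` vanishing off the last
coordinate is orthogonal to `(x | α)`, forcing `α ^ q * v_last = 0`. Conversely every dual vector `w` of `C` extends to a dual vector `(w | β)`
of `C'`, where `β` is chosen to make it orthogonal to `(x | α)`. The first map does not increase
weights, the second increases them by at most one.
-/

open Submodule Set

theorem add_pow_of_card_eq_sq {F : Type*} [Field F] [Fintype F] {q : ℕ}
    (hq : Fintype.card F = q ^ 2) (a b : F) : (a + b) ^ q = a ^ q + b ^ q := by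
  obtain ⟨m, hp, hcard⟩ := FiniteField.card F (ringChar F)
  have hdvd : q ∣ ringChar F ^ (m : ℕ) := ⟨q, by rw [← hcard, hq]; ring⟩
  obtain ⟨e, -, rfl⟩ := (Nat.dvd_prime_pow hp).mp hdvd
  have := Fact.mk hp
  exact add_pow_char_pow a b (ringChar F) e

theorem hwt_init_le {F : Type*} [Field F] [DecidableEq F] {n : ℕ} (v : Fin (n + 1) → F) :
    hwt (Fin.init v) ≤ hwt v := by
  refine Finset.card_le_card_of_injOn Fin.castSucc (fun i hi => ?_)
    (Fin.castSucc_injective _).injOn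
  simp only [Finset.coe_filter, Finset.mem_univ, true_and, mem_ofPred_eq] at hi ⊢
  exact hi

theorem hwt_snoc_le {F : Type*} [Field F] [DecidableEq F] {n : ℕ} (w : Fin n → F) (β : F) :
    hwt (Fin.snoc w β : Fin (n + 1) → F) ≤ hwt w + 1 := by
  simp only [hwt, Finset.card_filter, Fin.sum_univ_castSucc, Fin.snoc_castSucc, Fin.snoc_last]
  gcongr
  split_ifs <;> simp

section HermitianDual

variable {F : Type*} [Field F] {q n : ℕ}

def hermDual (q : ℕ) (C : Submodule F (Fin n → F)) : Set (Fin n → F) :=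
  {v | ∀ u ∈ C, ∑ i, u i ^ q * v i = 0}

theorem mem_hermDual_span_iff (hadd : ∀ a b : F, (a + b) ^ q = a ^ q + b ^ q)
    {s : Set (Fin n → F)} {v : Fin n → F} :
    v ∈ hermDual q (span F s) ↔ ∀ u ∈ s, ∑ i, u i ^ q * v i = 0 := by
  refine ⟨fun hv u hu => hv u (subset_span hu), fun hs u hu => ?_⟩
  induction hu using span_induction with
  | mem u hu => exact hs u hu
  | zero => simp [zero_pow (show q ≠ 0 by simpa using hadd 0 0)]
  | add a b _ _ ha hb => simp [hadd, add_mul, Finset.sum_add_distrib, ha, hb]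
  | smul c u _ hu => simp [mul_pow, mul_assoc, ← Finset.mul_sum, hu]

theorem sum_snoc_pow_mul (u : Fin n → F) (c : F) (v : Fin (n + 1) → F) :
    ∑ i, (Fin.snoc u c : Fin (n + 1) → F) i ^ q * v i
      = ∑ i, u i ^ q * Fin.init v i + c ^ q * v (Fin.last n) := by
  simp [Fin.sum_univ_castSucc, Fin.init]

end HermitianDual

section Extension

variable {F : Type*} [Field F] {q n k : ℕ} {G : Fin k → Fin n → F} {x : Fin n → F} {α : F}

def extendedCode (G : Fin k → Fin n → F) (x : Fin n → F) (α : F) :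
    Submodule F (Fin (n + 1) → F) :=
  span F (range (Fin.snoc (fun i : Fin k => Fin.snoc (G i) (0 : F)) (Fin.snoc x α) :
    Fin (k + 1) → Fin (n + 1) → F))

theorem mem_hermDual_extendedCode_iff (hadd : ∀ a b : F, (a + b) ^ q = a ^ q + b ^ q)
    {v : Fin (n + 1) → F} :
    v ∈ hermDual q (extendedCode G x α) ↔ Fin.init v ∈ hermDual q (span F (range G)) ∧
      ∑ i, x i ^ q * Fin.init v i + α ^ q * v (Fin.last n) = 0 := by
  have hq : q ≠ 0 := by simpa using hadd 0 0
  rw [extendedCode, mem_hermDual_span_iff hadd, mem_hermDual_span_iff hadd, forall_mem_range,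
    forall_mem_range, Fin.forall_fin_succ']
  simp [sum_snoc_pow_mul, zero_pow hq]

theorem init_ne_zero_of_mem_hermDual_extendedCode
    (hadd : ∀ a b : F, (a + b) ^ q = a ^ q + b ^ q) (hα : α ≠ 0) {v : Fin (n + 1) → F}
    (hv : v ∈ hermDual q (extendedCode G x α)) (hv0 : v ≠ 0) :
    Fin.init v ≠ 0 := by
  intro hinit
  have hlast : v (Fin.last n) = 0 := by
    simpa [hinit, hα] using ((mem_hermDual_extendedCode_iff hadd).1 hv).2
  exact hv0 (funext fun i => Fin.lastCases hlast (fun j => congrFun hinit j) i)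

theorem exists_snoc_mem_hermDual_extendedCode
    (hadd : ∀ a b : F, (a + b) ^ q = a ^ q + b ^ q) (hα : α ≠ 0) {w : Fin n → F}
    (hw : w ∈ hermDual q (span F (range G))) :
    ∃ β, (Fin.snoc w β : Fin (n + 1) → F) ∈ hermDual q (extendedCode G x α) := by
  refine ⟨-(∑ i, x i ^ q * w i) / α ^ q, ?_⟩
  rw [mem_hermDual_extendedCode_iff hadd, Fin.init_snoc, Fin.snoc_last]
  refine ⟨hw, ?_⟩
  field_simp
  ring

variable [DecidableEq F]

theorem hermDualDist_le_hwt {C : Submodule F (Fin n → F)} {v : Fin n → F} (hv0 : v ≠ 0)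
    (hv : v ∈ hermDual q C) : hermDualDist q C ≤ hwt v :=
  Nat.sInf_le ⟨v, hv0, hv, rfl⟩

theorem exists_hwt_eq_hermDualDist {C : Submodule F (Fin n → F)} {v : Fin n → F} (hv0 : v ≠ 0)
    (hv : v ∈ hermDual q C) : ∃ w ≠ 0, w ∈ hermDual q C ∧ hwt w = hermDualDist q C :=
  Nat.sInf_mem (s := {w | ∃ v : Fin n → F, v ≠ 0 ∧ v ∈ hermDual q C ∧ hwt v = w})
    ⟨_, v, hv0, hv, rfl⟩

theorem hermDualDist_eq_zero {C : Submodule F (Fin n → F)} (h : ∀ v ∈ hermDual q C, v = 0) :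
    hermDualDist q C = 0 := by
  refine Nat.sInf_eq_zero.2 (Or.inr (eq_empty_iff_forall_notMem.2 ?_))
  rintro _ ⟨v, hv0, hv, -⟩
  exact hv0 (h v hv)

theorem hermDualDist_span_le_extendedCode (hadd : ∀ a b : F, (a + b) ^ q = a ^ q + b ^ q)
    (hα : α ≠ 0) (hne : ∃ v ≠ 0, v ∈ hermDual q (extendedCode G x α)) :
    hermDualDist q (span F (range G)) ≤ hermDualDist q (extendedCode G x α) := by
  obtain ⟨v, hv0, hv⟩ := hne
  obtain ⟨v', hv'0, hv', hwt_v'⟩ := exists_hwt_eq_hermDualDist hv0 hv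
  calc hermDualDist q (span F (range G))
      ≤ hwt (Fin.init v') := hermDualDist_le_hwt
        (init_ne_zero_of_mem_hermDual_extendedCode hadd hα hv' hv'0)
        ((mem_hermDual_extendedCode_iff hadd).1 hv').1
    _ ≤ hwt v' := hwt_init_le v'
    _ = hermDualDist q (extendedCode G x α) := hwt_v'

theorem hermDualDist_extendedCode_le (hadd : ∀ a b : F, (a + b) ^ q = a ^ q + b ^ q)
    (hα : α ≠ 0) :
    hermDualDist q (extendedCode G x α) ≤ hermDualDist q (span F (range G)) + 1 := by
  by_cases hne : ∃ v ≠ 0, v ∈ hermDual q (extendedCode G x α)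
  · obtain ⟨v, hv0, hv⟩ := hne
    obtain ⟨w, hw0, hw, hwt_w⟩ := exists_hwt_eq_hermDualDist
      (init_ne_zero_of_mem_hermDual_extendedCode hadd hα hv hv0)
      ((mem_hermDual_extendedCode_iff hadd).1 hv).1
    obtain ⟨β, hβ⟩ := exists_snoc_mem_hermDual_extendedCode hadd hα hw
    have hsnoc0 : (Fin.snoc w β : Fin (n + 1) → F) ≠ 0 :=
      fun h => hw0 ((Fin.init_snoc _ _).symm.trans (congrArg Fin.init h))
    calc hermDualDist q (extendedCode G x α)
        ≤ hwt (Fin.snoc w β : Fin (n + 1) → F) := hermDualDist_le_hwt hsnoc0 hβ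
      _ ≤ hwt w + 1 := hwt_snoc_le w _
      _ = hermDualDist q (span F (range G)) + 1 := by rw [hwt_w]
  · push Not at hne
    rw [hermDualDist_eq_zero fun v hv => by_contra fun h0 => hne v h0 hv]
    exact Nat.zero_le _

end Extension

theorem stmt6_general {F : Type*} [Field F] [Fintype F] [DecidableEq F] (q n k : ℕ)
    (hq : Fintype.card F = q ^ 2)
    (G : Matrix (Fin k) (Fin n) F)
    (x : Fin n → F) (α : F) (hα : α ≠ 0)
    (hso' : ∀ u ∈ Submodule.span F (Set.range
        (Fin.snoc (fun i : Fin k => Fin.snoc (G i) (0 : F)) (Fin.snoc x α) :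
          Fin (k + 1) → Fin (n + 1) → F)),
      ∀ v ∈ Submodule.span F (Set.range
        (Fin.snoc (fun i : Fin k => Fin.snoc (G i) (0 : F)) (Fin.snoc x α) :
          Fin (k + 1) → Fin (n + 1) → F)),
        ∑ t, u t ^ q * v t = 0) :
    hermDualDist q (Submodule.span F (Set.range fun i => G i))
        ≤ hermDualDist q (Submodule.span F (Set.range
            (Fin.snoc (fun i : Fin k => Fin.snoc (G i) (0 : F)) (Fin.snoc x α) :
              Fin (k + 1) → Fin (n + 1) → F)))
    ∧ hermDualDist q (Submodule.span F (Set.range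
          (Fin.snoc (fun i : Fin k => Fin.snoc (G i) (0 : F)) (Fin.snoc x α) :
            Fin (k + 1) → Fin (n + 1) → F)))
        ≤ hermDualDist q (Submodule.span F (Set.range fun i => G i)) + 1 := by
  have hadd := add_pow_of_card_eq_sq hq
  have hxα : Fin.snoc x α ∈ hermDual q (extendedCode G x α) :=
    fun u hu => hso' u hu _ (subset_span ⟨Fin.last k, Fin.snoc_last _ _⟩)
  have hxα0 : (Fin.snoc x α : Fin (n + 1) → F) ≠ 0 :=
    fun h => hα (by simpa using congrFun h (Fin.last n))
  exact ⟨hermDualDist_span_le_extendedCode hadd hα ⟨_, hxα0, hxα⟩,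
    hermDualDist_extendedCode_le hadd hα⟩

/-- The Hermitian dual distance of the `[n+1, k+1]` Hermitian self-orthogonal extension
`C'` of a Hermitian self-orthogonal `[n,k]` code `C` satisfies
`d^{⊥h}(C) ≤ d(C'^{⊥h}) ≤ d^{⊥h}(C) + 1`. -/
theorem stmt6 {F : Type*} [Field F] [Fintype F] [DecidableEq F] (q n k : ℕ)
    (hq : Fintype.card F = q ^ 2)
    (G : Matrix (Fin k) (Fin n) F) (hGli : LinearIndependent F fun i => G i)
    (x : Fin n → F) (α : F) (hα : α ≠ 0)
    (hso : ∀ u ∈ Submodule.span F (Set.range fun i => G i),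
      ∀ v ∈ Submodule.span F (Set.range fun i => G i), ∑ t, u t ^ q * v t = 0)
    (hso' : ∀ u ∈ Submodule.span F (Set.range
        (Fin.snoc (fun i : Fin k => Fin.snoc (G i) (0 : F)) (Fin.snoc x α) :
          Fin (k + 1) → Fin (n + 1) → F)),
      ∀ v ∈ Submodule.span F (Set.range
        (Fin.snoc (fun i : Fin k => Fin.snoc (G i) (0 : F)) (Fin.snoc x α) :
          Fin (k + 1) → Fin (n + 1) → F)),
        ∑ t, u t ^ q * v t = 0) :
    hermDualDist q (Submodule.span F (Set.range fun i => G i))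
        ≤ hermDualDist q (Submodule.span F (Set.range
            (Fin.snoc (fun i : Fin k => Fin.snoc (G i) (0 : F)) (Fin.snoc x α) :
              Fin (k + 1) → Fin (n + 1) → F)))
    ∧ hermDualDist q (Submodule.span F (Set.range
          (Fin.snoc (fun i : Fin k => Fin.snoc (G i) (0 : F)) (Fin.snoc x α) :
            Fin (k + 1) → Fin (n + 1) → F)))
        ≤ hermDualDist q (Submodule.span F (Set.range fun i => G i)) + 1 :=
  stmt6_general q n k hq G x α hα hso'
end

section
/- Let C be an [n,k] linear code over F_{q^2} with generator matrix G and parity check matrix H. Then rank(H H^†) = n − k − dim(Hull_h(C)) and rank(G G^†) = k − dim(Hull_h(C)), where Hull_h(C) = C ∩ C^{⊥_h}. In particular rank(H H^†) = rank(G G^†) + n − 2k, and these ranks are independent of the choice of G and H. -/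
/-- Conjugate transpose with respect to the Frobenius `x ↦ x ^ q`. -/
def dag {F : Type*} [Field F] (q : ℕ) {m n : Type*} (A : Matrix m n F) : Matrix n m F :=
  Matrix.of fun i j => A j i ^ q

/-- The Hermitian dual `C^{⊥h} = {v | ∀ u ∈ C, Σ uᵢ^q vᵢ = 0}` of a code `C`. -/
def hermDualSub {F : Type*} [Field F] (q : ℕ) {n : ℕ} (C : Submodule F (Fin n → F)) :
    Submodule F (Fin n → F) where
  carrier := {v | ∀ u ∈ C, ∑ i, u i ^ q * v i = 0}
  zero_mem' := by intro u hu; simp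
  add_mem' := by
    intro a b ha hb u hu
    have h1 := ha u hu
    have h2 := hb u hu
    simp only [Pi.add_apply, mul_add, Finset.sum_add_distrib, h1, h2, add_zero]
  smul_mem' := by
    intro c v hv u hu
    have h1 := hv u hu
    simp only [Pi.smul_apply, smul_eq_mul, mul_left_comm, ← Finset.mul_sum, h1, mul_zero]

section Aux

variable {F : Type*} [Field F] {q : ℕ}

lemma mem_hermDualSub {n : ℕ} {C : Submodule F (Fin n → F)} {v : Fin n → F} :
    v ∈ hermDualSub q C ↔ ∀ u ∈ C, ∑ i, u i ^ q * v i = 0 := Iff.rfl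

variable (hadd : ∀ x y : F, (x + y) ^ q = x ^ q + y ^ q)
  (hpow : ∀ x : F, (x ^ q) ^ q = x) (hq0 : q ≠ 0)

include hadd hq0 in
lemma pow_sum_aux {ι : Type*} (s : Finset ι) (f : ι → F) :
    (∑ i ∈ s, f i) ^ q = ∑ i ∈ s, f i ^ q := by
  classical
  induction s using Finset.cons_induction with
  | empty => simp [zero_pow hq0]
  | cons a s ha ih => rw [Finset.sum_cons, Finset.sum_cons, hadd, ih]

include hadd hpow hq0 in
lemma swap_sum_aux {n : ℕ} (u v : Fin n → F) :
    (∑ i, u i ^ q * v i) ^ q = ∑ i, v i ^ q * u i := by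
  rw [pow_sum_aux hadd hq0]
  refine Finset.sum_congr rfl fun i _ => ?_
  rw [mul_pow, hpow, mul_comm]

include hadd hpow hq0 in
lemma frob_inj_aux : Function.Injective (fun x : F => x ^ q) := by
  intro a b h
  have : (a ^ q) ^ q = (b ^ q) ^ q := by simp only at h; rw [h]
  rwa [hpow, hpow] at this

include hadd hpow hq0 in
lemma mem_dual_iff_aux {r n : ℕ} (B : Matrix (Fin r) (Fin n) F) (v : Fin n → F) :
    v ∈ hermDualSub q (Submodule.span F (Set.range fun i => B i)) ↔
      ∀ i, ∑ l, B i l ^ q * v l = 0 := by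
  constructor
  · intro hv i
    exact hv (B i) (Submodule.subset_span ⟨i, rfl⟩)
  · intro h u hu
    induction hu using Submodule.span_induction with
    | mem u hu => obtain ⟨i, rfl⟩ := hu; exact h i
    | zero => simp [zero_pow hq0]
    | add a b _ _ ha hb =>
        simp only [Pi.add_apply, hadd, add_mul, Finset.sum_add_distrib, ha, hb, add_zero]
    | smul c a _ ha =>
        simp only [Pi.smul_apply, smul_eq_mul, mul_pow, mul_assoc, ← Finset.mul_sum, ha,
          mul_zero]

include hadd hpow hq0 in
lemma conj_rows_li_aux {r n : ℕ} (B : Matrix (Fin r) (Fin n) F)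
    (hBli : LinearIndependent F fun i => B i) :
    LinearIndependent F fun i => (fun l => B i l ^ q) := by
  rw [Fintype.linearIndependent_iff]
  intro c hc j
  have key : ∀ l, ∑ i, c i * B i l ^ q = 0 := by
    intro l
    have := congrFun hc l
    simpa [Finset.sum_apply] using this
  have key2 : ∀ l, ∑ i, c i ^ q * B i l = 0 := by
    intro l
    have := congrArg (fun x : F => x ^ q) (key l)
    simp only [zero_pow hq0] at this
    rw [pow_sum_aux hadd hq0] at this
    calc ∑ i, c i ^ q * B i l = ∑ i, (c i * B i l ^ q) ^ q := by
          refine Finset.sum_congr rfl fun i _ => ?_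
          rw [mul_pow, hpow]
      _ = 0 := this
  have : ∀ i, c i ^ q = 0 := by
    rw [Fintype.linearIndependent_iff] at hBli
    refine hBli (fun i => c i ^ q) ?_
    funext l
    simpa [Finset.sum_apply] using key2 l
  have := this j
  exact pow_eq_zero_iff hq0 |>.mp this

include hadd hpow hq0 in
lemma dual_finrank_aux {r n : ℕ} (B : Matrix (Fin r) (Fin n) F)
    (hBli : LinearIndependent F fun i => B i) :
    Module.finrank F ↥(hermDualSub q (Submodule.span F (Set.range fun i => B i))) = n - r := by
  classical
  set Bc : Matrix (Fin r) (Fin n) F := Matrix.of fun i l => B i l ^ q with hBc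
  have hker : hermDualSub q (Submodule.span F (Set.range fun i => B i)) =
      LinearMap.ker Bc.mulVecLin := by
    ext v
    rw [mem_dual_iff_aux hadd hpow hq0, LinearMap.mem_ker]
    simp only [Matrix.mulVecLin_apply]
    constructor
    · intro h; funext i
      simpa [Matrix.mulVec, dotProduct, hBc] using h i
    · intro h i
      have := congrFun h i
      simpa [Matrix.mulVec, dotProduct, hBc] using this
  have hrank : Bc.rank = r := by
    have : LinearIndependent F Bc := conj_rows_li_aux hadd hpow hq0 B hBli
    simpa using this.rank_matrix
  have hrn := LinearMap.finrank_range_add_finrank_ker Bc.mulVecLin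
  rw [Module.finrank_pi] at hrn
  have : Bc.rank + Module.finrank F ↥(LinearMap.ker Bc.mulVecLin) = n := by
    rw [Matrix.rank]; simpa using hrn
  rw [hker]
  omega

include hadd hpow hq0 in
lemma double_dual_le_aux {n : ℕ} (C : Submodule F (Fin n → F)) :
    C ≤ hermDualSub q (hermDualSub q C) := by
  intro w hw u hu
  have h1 : ∑ i, w i ^ q * u i = 0 := hu w hw
  have := congrArg (fun x : F => x ^ q) h1
  simp only [zero_pow hq0] at this
  rw [swap_sum_aux hadd hpow hq0] at this
  exact this

lemma finrank_eq_of_card_eq {V W : Type*} [Fintype F]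
    [AddCommGroup V] [Module F V] [AddCommGroup W] [Module F W] [Finite V] [Finite W]
    (h : Nat.card V = Nat.card W) : Module.finrank F V = Module.finrank F W := by
  cases nonempty_fintype V
  cases nonempty_fintype W
  rw [Nat.card_eq_fintype_card, Nat.card_eq_fintype_card,
    Module.card_eq_pow_finrank (K := F) (V := V), Module.card_eq_pow_finrank (K := F) (V := W)] at h
  exact Nat.pow_right_injective Fintype.one_lt_card h

include hadd hpow hq0 in
lemma core_rank_aux [Fintype F] {r n : ℕ} (B : Matrix (Fin r) (Fin n) F)
    (hBli : LinearIndependent F fun i => B i) :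
    (B * dag q B).rank = r - Module.finrank F
      ↥(Submodule.span F (Set.range fun i => B i) ⊓
        hermDualSub q (Submodule.span F (Set.range fun i => B i)))
    ∧ Module.finrank F ↥(Submodule.span F (Set.range fun i => B i) ⊓
        hermDualSub q (Submodule.span F (Set.range fun i => B i))) ≤ r := by
  classical
  set S := Submodule.span F (Set.range fun i => B i) with hS
  set M : Matrix (Fin r) (Fin r) F := B * dag q B with hM
  -- key computation
  have hinner : ∀ (y : Fin r → F) (l : Fin n),
      (∑ t, y t ^ q * B t l) ^ q = ∑ t, B t l ^ q * y t := by
    intro y l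
    rw [pow_sum_aux hadd hq0]
    refine Finset.sum_congr rfl fun t _ => ?_
    rw [mul_pow, hpow, mul_comm]
  have hMy : ∀ (y : Fin r → F) (i : Fin r),
      M.mulVec y i = ∑ l, B i l * (∑ t, y t ^ q * B t l) ^ q := by
    intro y i
    have h1 : M.mulVec y i = ∑ t, (∑ l, B i l * B t l ^ q) * y t := by
      simp [hM, Matrix.mulVec, dotProduct, Matrix.mul_apply, dag]
    rw [h1]
    have h2 : ∑ t, (∑ l, B i l * B t l ^ q) * y t
        = ∑ l, B i l * ∑ t, B t l ^ q * y t := by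
      simp_rw [Finset.sum_mul, Finset.mul_sum]
      rw [Finset.sum_comm]
      refine Finset.sum_congr rfl fun l _ => Finset.sum_congr rfl fun t _ => by ring
    rw [h2]
    refine Finset.sum_congr rfl fun l _ => ?_
    rw [hinner]
  -- the map from ker to hull
  have hmem : ∀ y : Fin r → F, M.mulVec y = 0 →
      (fun l => ∑ t, y t ^ q * B t l) ∈ S ⊓ hermDualSub q S := by
    intro y hy
    constructor
    · have : (fun l => ∑ t, y t ^ q * B t l) = ∑ t, y t ^ q • B t := by
        funext l; simp [Finset.sum_apply]
      rw [this]
      exact Submodule.sum_mem _ fun t _ =>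
        Submodule.smul_mem _ _ (Submodule.subset_span ⟨t, rfl⟩)
    · show (fun l => ∑ t, y t ^ q * B t l) ∈
          hermDualSub q (Submodule.span F (Set.range fun i => B i))
      rw [mem_dual_iff_aux hadd hpow hq0]
      intro i
      have h0 : ∑ l, B i l * (∑ t, y t ^ q * B t l) ^ q = 0 := by
        rw [← hMy y i, hy]; rfl
      have := congrArg (fun x : F => x ^ q) h0
      simp only [zero_pow hq0] at this
      have hsw : (∑ l, B i l * (∑ t, y t ^ q * B t l) ^ q) ^ q
          = ∑ l, B i l ^ q * (∑ t, y t ^ q * B t l) := by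
        rw [pow_sum_aux hadd hq0]
        refine Finset.sum_congr rfl fun l _ => ?_
        rw [mul_pow, hpow]
      rw [hsw] at this
      exact this
  set Hull := S ⊓ hermDualSub q S with hHull
  let Φ : ↥(LinearMap.ker M.mulVecLin) → ↥Hull := fun y =>
    ⟨fun l => ∑ t, (y : Fin r → F) t ^ q * B t l, hmem y (by
      have := y.2; rwa [LinearMap.mem_ker, Matrix.mulVecLin_apply] at this)⟩
  have hΦbij : Function.Bijective Φ := by
    constructor
    · rintro ⟨y, hy⟩ ⟨y', hy'⟩ h
      have h' : ∀ l, ∑ t, y t ^ q * B t l = ∑ t, y' t ^ q * B t l := by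
        intro l
        exact congrFun (congrArg Subtype.val h) l
      have : ∀ t, y t ^ q - y' t ^ q = 0 := by
        have hli := Fintype.linearIndependent_iff.mp hBli
        refine hli (fun t => y t ^ q - y' t ^ q) ?_
        funext l
        simp only [Finset.sum_apply, Pi.smul_apply, smul_eq_mul, sub_mul, Pi.zero_apply,
          Finset.sum_sub_distrib]
        rw [h' l, sub_self]
      refine Subtype.ext (funext fun t => ?_)
      exact frob_inj_aux hadd hpow hq0 (sub_eq_zero.mp (this t))
    · rintro ⟨w, hwS, hwD⟩
      obtain ⟨c, hc⟩ := (Submodule.mem_span_range_iff_exists_fun F).mp hwS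
      refine ⟨⟨fun t => c t ^ q, ?_⟩, ?_⟩
      · rw [LinearMap.mem_ker, Matrix.mulVecLin_apply]
        funext i
        rw [hMy]
        have hw : ∀ l, ∑ t, (c t ^ q) ^ q * B t l = w l := by
          intro l
          have := congrFun hc l
          simp only [Finset.sum_apply, Pi.smul_apply, smul_eq_mul] at this
          rw [← this]
          exact Finset.sum_congr rfl fun t _ => by rw [hpow]
        simp only [hw]
        have hd : ∑ l, B i l ^ q * w l = 0 :=
          (mem_dual_iff_aux hadd hpow hq0 B w).mp
            (show w ∈ hermDualSub q (Submodule.span F (Set.range fun i => B i)) from hwD) i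
        have := congrArg (fun x : F => x ^ q) hd
        simp only [zero_pow hq0] at this
        rw [swap_sum_aux hadd hpow hq0] at this
        calc ∑ l, B i l * w l ^ q = ∑ l, w l ^ q * B i l := by
              refine Finset.sum_congr rfl fun l _ => mul_comm _ _
          _ = 0 := this
      · ext l
        simp only [Φ]
        have := congrFun hc l
        simp only [Finset.sum_apply, Pi.smul_apply, smul_eq_mul] at this
        rw [← this]
        exact Finset.sum_congr rfl fun t _ => by rw [hpow]
  have hcard : Nat.card ↥(LinearMap.ker M.mulVecLin) = Nat.card ↥Hull :=
    Nat.card_eq_of_bijective Φ hΦbij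
  have hfr : Module.finrank F ↥(LinearMap.ker M.mulVecLin) = Module.finrank F ↥Hull :=
    finrank_eq_of_card_eq hcard
  have hrn := LinearMap.finrank_range_add_finrank_ker M.mulVecLin
  rw [Module.finrank_pi] at hrn
  have hrank : M.rank + Module.finrank F ↥Hull = r := by
    rw [Matrix.rank, ← hfr]; simpa using hrn
  constructor
  · omega
  · omega

end Aux

/-- For an `[n,k]` code `C` over `F_{q^2}` with full-rank generator matrix `G` and
parity-check matrix `H` (a generator matrix of `C^{⊥h}`):
`rank(HH†) = n − k − dim Hull_h(C)`, `rank(GG†) = k − dim Hull_h(C)`, and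
`rank(HH†) = rank(GG†) + n − 2k`. -/
theorem stmt7 {F : Type*} [Field F] [Fintype F] (q n k : ℕ)
    (hq : Fintype.card F = q ^ 2)
    (C : Submodule F (Fin n → F)) (hk : Module.finrank F C = k)
    (G : Matrix (Fin k) (Fin n) F)
    (hG : Submodule.span F (Set.range fun i => G i) = C)
    (hGli : LinearIndependent F fun i => G i)
    (H : Matrix (Fin (n - k)) (Fin n) F)
    (hH : Submodule.span F (Set.range fun i => H i) = hermDualSub q C)
    (hHli : LinearIndependent F fun i => H i) :
    (H * dag q H).rank = n - k - Module.finrank F ↥(C ⊓ hermDualSub q C)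
    ∧ (G * dag q G).rank = k - Module.finrank F ↥(C ⊓ hermDualSub q C)
    ∧ (H * dag q H).rank + 2 * k = (G * dag q G).rank + n := by
  classical
  -- Frobenius facts
  have hq0 : q ≠ 0 := by
    intro h
    rw [h] at hq
    simp only [h, pow_two, mul_zero, zero_mul] at hq
    exact absurd hq Fintype.card_ne_zero
  have hpow : ∀ x : F, (x ^ q) ^ q = x := by
    intro x
    rw [← pow_mul, ← pow_two, ← hq]
    exact FiniteField.pow_card x
  have hadd : ∀ x y : F, (x + y) ^ q = x ^ q + y ^ q := by
    obtain ⟨p, hc⟩ := CharP.exists F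
    haveI := hc
    obtain ⟨f, hp, hcard⟩ := FiniteField.card F p
    haveI : Fact p.Prime := ⟨hp⟩
    have hdvd : q ∣ p ^ (f : ℕ) := by
      rw [← hcard, hq]
      exact dvd_pow_self q (by norm_num)
    obtain ⟨e, _, rfl⟩ := (Nat.dvd_prime_pow hp).mp hdvd
    intro x y
    exact add_pow_char_pow p e (x := x) (y := y)
  -- core applications
  have hcoreG := core_rank_aux hadd hpow hq0 G hGli
  rw [hG] at hcoreG
  have hcoreH := core_rank_aux hadd hpow hq0 H hHli
  rw [hH] at hcoreH
  -- double dual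
  have hkn : k ≤ n := by
    rw [← hk]
    have := Submodule.finrank_le C
    simpa [Module.finrank_pi] using this
  have hdd : hermDualSub q (hermDualSub q C) = C := by
    have hle := double_dual_le_aux hadd hpow hq0 C
    have hfr : Module.finrank F ↥(hermDualSub q (hermDualSub q C)) = n - (n - k) := by
      have := dual_finrank_aux hadd hpow hq0 H hHli
      rwa [hH] at this
    have : n - (n - k) = k := by omega
    rw [this] at hfr
    exact (Submodule.eq_of_le_of_finrank_eq hle (by rw [hk, hfr])).symm
  rw [hdd] at hcoreH
  have hcomm : hermDualSub q C ⊓ C = C ⊓ hermDualSub q C := inf_comm _ _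
  rw [hcomm] at hcoreH
  obtain ⟨hH1, hH2⟩ := hcoreH
  obtain ⟨hG1, hG2⟩ := hcoreG
  refine ⟨hH1, hG1, ?_⟩
  omega
end

section
/- Let H be the (deg g + n) × 2n block matrix H = [[H_1, 0],[H_2, I_n]] over F_{q^2}, where H_1 is a (deg g)×n matrix with H_1 H_1^† nonsingular and H_2 is an invertible n×n matrix. Set P = H_1^†(H_1 H_1^†)^{-1} H_1 − (H_2^† H_2)^{-1}. If 1 is not an eigenvalue of P, then rank(H H^†) = n + deg g (i.e., H H^† has full rank). -/
section aux

variable {F : Type*} [Field F] {q : ℕ}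

lemma exists_pow_ringHom (F : Type*) [Field F] [Fintype F] (q : ℕ)
    (hq : Fintype.card F = q ^ 2) : ∃ φ : F →+* F, ∀ x : F, φ x = x ^ q := by
  set p := ringChar F with hp'
  haveI : CharP F p := ringChar.charP F
  have hp : p.Prime := CharP.char_is_prime F p
  haveI : Fact p.Prime := ⟨hp⟩
  obtain ⟨m, hm⟩ := FiniteField.card F p
  have hdvd : q ∣ p ^ (m : ℕ) := by
    rw [← hm.2, hq]
    exact dvd_pow_self q two_ne_zero
  obtain ⟨k, -, rfl⟩ := (Nat.dvd_prime_pow hp).mp hdvd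
  haveI : ExpChar F p := ExpChar.prime hp
  exact ⟨iterateFrobenius F p k, fun x => rfl⟩

lemma dag_eq_map (φ : F →+* F) (hφ : ∀ x : F, φ x = x ^ q)
    {m n : Type*} (A : Matrix m n F) : dag q A = (Matrix.transpose A).map φ := by
  ext i j
  simp [dag, Matrix.map, Matrix.transpose, hφ]

end aux

/-- For the block matrix `H = [[H₁, 0], [H₂, I]]` with `H₁H₁†` nonsingular and `H₂`
invertible, if `1` is not an eigenvalue of `P = H₁†(H₁H₁†)⁻¹H₁ − (H₂†H₂)⁻¹`, then
`H H†` has full rank `n + r` (`r = deg g`). -/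
theorem stmt9 {F : Type*} [Field F] [Fintype F] (q r n : ℕ)
    (hq : Fintype.card F = q ^ 2)
    (H1 : Matrix (Fin r) (Fin n) F) (H2 : Matrix (Fin n) (Fin n) F)
    (h1 : IsUnit (H1 * dag q H1)) (h2 : IsUnit H2)
    (hP : ((dag q H1 * (H1 * dag q H1)⁻¹ * H1 - (dag q H2 * H2)⁻¹) - 1).det ≠ 0) :
    Matrix.rank ((Matrix.fromBlocks H1 (0 : Matrix (Fin r) (Fin n) F) H2
          (1 : Matrix (Fin n) (Fin n) F)) *
        dag q (Matrix.fromBlocks H1 (0 : Matrix (Fin r) (Fin n) F) H2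
          (1 : Matrix (Fin n) (Fin n) F))) = n + r := by
  classical
  obtain ⟨φ, hφ⟩ := exists_pow_ringHom F q hq
  have hdet2 : IsUnit H2.det := (Matrix.isUnit_iff_isUnit_det H2).mp h2
  have hdag2 : IsUnit (dag q H2) := by
    rw [Matrix.isUnit_iff_isUnit_det, dag_eq_map φ hφ, Matrix.transpose_map, Matrix.det_transpose,
      ← RingHom.mapMatrix_apply, ← RingHom.map_det]
    exact isUnit_iff_ne_zero.mpr (fun h => hdet2.ne_zero (φ.injective (by simpa using h)))
  have hdag2det : IsUnit (dag q H2).det := (Matrix.isUnit_iff_isUnit_det _).mp hdag2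
  have hdagM : dag q (Matrix.fromBlocks H1 (0 : Matrix (Fin r) (Fin n) F) H2
      (1 : Matrix (Fin n) (Fin n) F)) =
      Matrix.fromBlocks (dag q H1) (dag q H2) 0 1 := by
    simp only [dag_eq_map φ hφ, Matrix.fromBlocks_transpose, Matrix.fromBlocks_map,
      Matrix.transpose_zero, Matrix.transpose_one, Matrix.map_zero _ φ.map_zero,
      Matrix.map_one _ φ.map_zero φ.map_one]
  set A := H1 * dag q H1 with hA
  have hMmul : (Matrix.fromBlocks H1 (0 : Matrix (Fin r) (Fin n) F) H2
          (1 : Matrix (Fin n) (Fin n) F)) *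
        dag q (Matrix.fromBlocks H1 (0 : Matrix (Fin r) (Fin n) F) H2
          (1 : Matrix (Fin n) (Fin n) F)) =
      Matrix.fromBlocks A (H1 * dag q H2) (H2 * dag q H1) (H2 * dag q H2 + 1) := by
    rw [hdagM, Matrix.fromBlocks_multiply]
    simp [hA]
  -- Schur complement identity
  have hSchur : (H2 * dag q H2 + 1) - (H2 * dag q H1) * A⁻¹ * (H1 * dag q H2) =
      -(H2 * ((dag q H1 * A⁻¹ * H1 - (dag q H2 * H2)⁻¹) - 1) * dag q H2) := by
    have e1 : H2 * (dag q H2 * H2)⁻¹ * dag q H2 = 1 := by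
      rw [Matrix.mul_inv_rev, ← Matrix.mul_assoc,
        Matrix.mul_nonsing_inv _ hdet2, Matrix.one_mul,
        Matrix.nonsing_inv_mul _ hdag2det]
    have e2 : H2 * (dag q H1 * A⁻¹ * H1) * dag q H2 =
        (H2 * dag q H1) * A⁻¹ * (H1 * dag q H2) := by
      simp only [Matrix.mul_assoc]
    have expand : H2 * ((dag q H1 * A⁻¹ * H1 - (dag q H2 * H2)⁻¹) - 1) * dag q H2
        = H2 * (dag q H1 * A⁻¹ * H1) * dag q H2
          - H2 * (dag q H2 * H2)⁻¹ * dag q H2 - H2 * dag q H2 := by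
      noncomm_ring
    rw [expand, e1, e2]
    abel
  -- determinant is nonzero
  haveI : Invertible A := h1.invertible
  have hdetM : ((Matrix.fromBlocks H1 (0 : Matrix (Fin r) (Fin n) F) H2
          (1 : Matrix (Fin n) (Fin n) F)) *
        dag q (Matrix.fromBlocks H1 (0 : Matrix (Fin r) (Fin n) F) H2
          (1 : Matrix (Fin n) (Fin n) F))).det ≠ 0 := by
    rw [hMmul, Matrix.det_fromBlocks₁₁, Matrix.invOf_eq_nonsing_inv, hSchur,
      Matrix.det_neg, Matrix.det_mul, Matrix.det_mul]
    have hAdet : A.det ≠ 0 := ((Matrix.isUnit_iff_isUnit_det A).mp h1).ne_zero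
    have h2' : H2.det ≠ 0 := hdet2.ne_zero
    have hd2' : (dag q H2).det ≠ 0 := hdag2det.ne_zero
    exact mul_ne_zero hAdet (mul_ne_zero (pow_ne_zero _ (neg_ne_zero.mpr one_ne_zero))
      (mul_ne_zero (mul_ne_zero h2' hP) hd2'))
  have hu : IsUnit ((Matrix.fromBlocks H1 (0 : Matrix (Fin r) (Fin n) F) H2
          (1 : Matrix (Fin n) (Fin n) F)) *
        dag q (Matrix.fromBlocks H1 (0 : Matrix (Fin r) (Fin n) F) H2
          (1 : Matrix (Fin n) (Fin n) F))) :=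
    (Matrix.isUnit_iff_isUnit_det _).mpr (isUnit_iff_ne_zero.mpr hdetM)
  rw [Matrix.rank_of_isUnit _ hu]
  simp [add_comm]
end

section
/- Let C_{q^2}(f,g) be the quasi-cyclic code of length 2n over F_{q^2} generated by (g(x), f(x)g(x)) with g(x) | x^n−1. If g^{⊥q}(x) divides g(x), then C_{q^2}(f,g) is contained in its Hermitian dual, i.e., C_{q^2}(f,g) ⊆ C_{q^2}(f,g)^{⊥_h}. -/
/-!
Let `φ x = x ^ q`, an involutive automorphism of `F` since `|F| = q²`; write `p^φ` for `p` with `φ`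
applied to its coefficients and `p^*` for its reverse. Reversing `g h = xⁿ - 1` gives
`g^* h^* = -(xⁿ - 1)`, so the hypothesis `h^{*φ} ∣ g` yields `xⁿ - 1 ∣ g^φ g^*`. For multiples `a`,
`b` of `g` of degree `< n`, the Hermitian pairing `∑ φ(a_t) b_t` is the coefficient of `x^{n-1}` in
`a^φ · x^{n-1} b(1/x)`, a multiple of `g^φ g^*` and hence of `xⁿ - 1`; as its degree is at most
`2n - 2`, that coefficient vanishes. Both halves of each generator of the code are such multiples,
and sesquilinearity extends the orthogonality to the whole code.
-/

open Polynomial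

/-- The coefficient vector in `F^n` of (the reduction mod `xⁿ − 1` of) a polynomial. -/
noncomputable def vecOf {F : Type*} [Field F] (n : ℕ) (p : Polynomial F) : Fin n → F :=
  fun i => (p %ₘ (X ^ n - 1)).coeff i

/-- Entrywise `q`-th power of the coefficients of a polynomial. -/
noncomputable def qpowPoly {F : Type*} [Field F] (q : ℕ) (p : Polynomial F) : Polynomial F :=
  ∑ i ∈ Finset.range (p.natDegree + 1), C (p.coeff i ^ q) * X ^ i

open Finset

namespace Polynomial

@[simp]
theorem natDegree_X_pow_sub_one {R : Type*} [Ring R] [Nontrivial R] (n : ℕ) :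
    (X ^ n - 1 : R[X]).natDegree = n := by
  simpa using natDegree_X_pow_sub_C (r := (1 : R))

theorem reverse_X_pow_sub_one {R : Type*} [Ring R] [Nontrivial R] (n : ℕ) :
    (X ^ n - 1 : R[X]).reverse = 1 - X ^ n := by
  rw [reverse, natDegree_X_pow_sub_one, reflect_sub, reflect_monomial, reflect_one,
    revAt_le le_rfl, Nat.sub_self, pow_zero]

theorem monic_X_pow_sub_one {R : Type*} [Ring R] {n : ℕ} (hn : n ≠ 0) :
    (X ^ n - 1 : R[X]).Monic :=
  C_1 (R := R) ▸ monic_X_pow_sub_C 1 hn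

theorem natDegree_modByMonic_X_pow_sub_one_lt {R : Type*} [CommRing R] [Nontrivial R]
    (p : R[X]) {n : ℕ} (hn : 0 < n) : (p %ₘ (X ^ n - 1)).natDegree < n := by
  have hne : (X ^ n - 1 : R[X]) ≠ 1 := fun h => by
    have := natDegree_X_pow_sub_one (R := R) n
    rw [h, natDegree_one] at this
    omega
  simpa using natDegree_modByMonic_lt p (monic_X_pow_sub_one hn.ne') hne

theorem dvd_modByMonic_of_dvd {R : Type*} [CommRing R] {g p m : R[X]} (hm : g ∣ m)
    (hp : g ∣ p) : g ∣ p %ₘ m :=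
  modByMonic_eq_sub_mul_div p m ▸ dvd_sub hp (dvd_mul_of_dvd_left hm _)

theorem coeff_mul_reflect {R : Type*} [Semiring R] (p r : R[X]) (N : ℕ) :
    (p * reflect N r).coeff N = ∑ t ∈ range (N + 1), p.coeff t * r.coeff t := by
  rw [coeff_mul, Nat.sum_antidiagonal_eq_sum_range_succ_mk]
  refine sum_congr rfl fun t ht => ?_
  rw [coeff_reflect, revAt_le (Nat.sub_le N t), Nat.sub_sub_self (mem_range_succ_iff.1 ht)]

/-- A nonzero multiple of `xⁿ - 1` has degree at least `n`, and its coefficients below `n` are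
those of the cofactor, up to sign. -/
theorem coeff_eq_zero_of_X_pow_sub_one_dvd {R : Type*} [CommRing R] [Nontrivial R] {n k : ℕ}
    {P : R[X]} (hP : X ^ n - 1 ∣ P) (hk : k < n) (hdeg : P.natDegree < n + k) :
    P.coeff k = 0 := by
  obtain ⟨Q, rfl⟩ := hP
  rcases eq_or_ne Q 0 with rfl | hQ
  · simp
  rw [(monic_X_pow_sub_one (by omega)).natDegree_mul' hQ, natDegree_X_pow_sub_one] at hdeg
  rw [sub_mul, coeff_sub, coeff_X_pow_mul', if_neg (by omega), one_mul,
    coeff_eq_zero_of_natDegree_lt (by omega), sub_zero]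

theorem reverse_dvd_reflect {R : Type*} [Semiring R] [NoZeroDivisors R] {g b : R[X]} {N : ℕ}
    (hb : g ∣ b) (hdeg : b.natDegree ≤ N) : g.reverse ∣ reflect N b := by
  obtain ⟨w, rfl⟩ := hb
  rcases eq_or_ne (g * w) 0 with hgw | hgw
  · simp [hgw]
  obtain ⟨hg, hw⟩ := mul_ne_zero_iff.1 hgw
  rw [natDegree_mul hg hw] at hdeg
  rw [← Nat.add_sub_of_le (le_of_add_le_left hdeg), reflect_mul g w le_rfl (by omega)]
  exact dvd_mul_right _ _

theorem sum_map_coeff_mul_coeff_eq_zero {R : Type*} [CommRing R] [IsDomain R] (φ : R →+* R)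
    {n : ℕ} {g a b : R[X]} (hg : X ^ n - 1 ∣ g.map φ * g.reverse) (ha : g ∣ a) (hb : g ∣ b)
    (hda : a.natDegree < n) (hdb : b.natDegree < n) :
    ∑ t ∈ range n, φ (a.coeff t) * b.coeff t = 0 := by
  have hsucc : n = n - 1 + 1 := by omega
  have hdvd : X ^ n - 1 ∣ a.map φ * reflect (n - 1) b :=
    hg.trans (mul_dvd_mul (map_dvd φ ha) (reverse_dvd_reflect hb (by omega)))
  have hdeg : (a.map φ * reflect (n - 1) b).natDegree < n + (n - 1) :=
    natDegree_mul_le.trans_lt <| by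
      have := natDegree_map_le (f := φ) (p := a)
      have := natDegree_reflect_le (N := n - 1) (p := b)
      omega
  simpa only [coeff_map, ← hsucc, coeff_mul_reflect] using
    coeff_eq_zero_of_X_pow_sub_one_dvd hdvd (by omega) hdeg

theorem X_pow_sub_one_dvd_map_mul_reverse {R : Type*} [CommRing R] [IsDomain R] {φ : R →+* R}
    (hφ : φ.comp φ = RingHom.id R) {n : ℕ} {g h : R[X]} (hgh : g * h = X ^ n - 1)
    (hdvd : h.reverse.map φ ∣ g) : X ^ n - 1 ∣ g.map φ * g.reverse := by
  obtain ⟨e, rfl⟩ := hdvd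
  have hrev : h.reverse * (h.reverse.map φ * e).reverse = 1 - X ^ n := by
    rw [← reverse_X_pow_sub_one, ← hgh, reverse_mul_of_domain _ h, mul_comm]
  refine ⟨-e.map φ, ?_⟩
  simp only [Polynomial.map_mul, map_map, hφ, map_id]
  linear_combination (e.map φ) * hrev

theorem qpowPoly_eq_map {F : Type*} [Field F] {q : ℕ} {φ : F →+* F} (hφ : ∀ x, φ x = x ^ q)
    (p : F[X]) : qpowPoly q p = p.map φ := by
  rw [(p.map φ).as_sum_range_C_mul_X_pow' (natDegree_map_le.trans_lt (Nat.lt_succ_self _))]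
  simp only [qpowPoly, coeff_map, hφ]

end Polynomial

theorem FiniteField.exists_ringHom_pow_eq_of_dvd_card {F : Type*} [Field F] [Fintype F] {q : ℕ}
    (hq : q ∣ Fintype.card F) : ∃ φ : F →+* F, ∀ x, φ x = x ^ q := by
  obtain ⟨m, hp, hcard⟩ := FiniteField.card F (ringChar F)
  have : Fact (ringChar F).Prime := ⟨hp⟩
  obtain ⟨i, -, rfl⟩ := (Nat.dvd_prime_pow hp).1 (hcard ▸ hq)
  exact ⟨iterateFrobenius F (ringChar F) i, iterateFrobenius_def (ringChar F) i⟩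

theorem Submodule.span_le_orthogonalBilin_span {R M P : Type*} [CommSemiring R]
    [AddCommMonoid M] [Module R M] [AddCommMonoid P] [Module R P] {I₁ I₂ : R →+* R}
    (B : M →ₛₗ[I₁] M →ₛₗ[I₂] P) {s : Set M} (hs : ∀ x ∈ s, ∀ y ∈ s, B x y = 0) :
    span R s ≤ (span R s).orthogonalBilin B :=
  span_le.2 fun y hy _ hx =>
    (span_le (p := LinearMap.ker (B.flip y)).2 fun x hx => hs x hx y hy) hx

section HermitianForm

variable {R : Type*} [CommSemiring R] (φ : R →+* R)

noncomputable def hermitianForm (ι : Type*) [Fintype ι] : (ι → R) →ₛₗ[φ] (ι → R) →ₗ[R] R :=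
  LinearMap.mk₂'ₛₗ φ (RingHom.id R) (fun u v => ∑ t, φ (u t) * v t)
    (fun _ _ _ => by simp only [Pi.add_apply, map_add, add_mul, sum_add_distrib])
    (fun _ _ _ => by simp only [Pi.smul_apply, smul_eq_mul, map_mul, mul_assoc, mul_sum])
    (fun _ _ _ => by simp only [Pi.add_apply, mul_add, sum_add_distrib])
    (fun _ _ _ => by
      simp only [Pi.smul_apply, smul_eq_mul, RingHom.id_apply, mul_left_comm _ _, mul_sum])

theorem hermitianForm_apply {ι : Type*} [Fintype ι] (u v : ι → R) :
    hermitianForm φ ι u v = ∑ t, φ (u t) * v t :=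
  rfl

theorem hermitianForm_append {m n : ℕ} (u v : Fin m → R) (u' v' : Fin n → R) :
    hermitianForm φ (Fin (m + n)) (Fin.append u u') (Fin.append v v') =
      hermitianForm φ (Fin m) u v + hermitianForm φ (Fin n) u' v' := by
  simp only [hermitianForm_apply, Fin.sum_univ_add, Fin.append_left, Fin.append_right]

end HermitianForm

theorem hermitianForm_vecOf_eq_zero {F : Type*} [Field F] {φ : F →+* F} {n : ℕ} (hn : 0 < n)
    {g a b : F[X]} (hgM : g ∣ X ^ n - 1) (hg : X ^ n - 1 ∣ g.map φ * g.reverse) (ha : g ∣ a)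
    (hb : g ∣ b) : hermitianForm φ (Fin n) (vecOf n a) (vecOf n b) = 0 := by
  simp only [hermitianForm_apply, vecOf]
  rw [Fin.sum_univ_eq_sum_range
    (fun t => φ ((a %ₘ (X ^ n - 1)).coeff t) * (b %ₘ (X ^ n - 1)).coeff t) n]
  exact sum_map_coeff_mul_coeff_eq_zero φ hg (dvd_modByMonic_of_dvd hgM ha)
    (dvd_modByMonic_of_dvd hgM hb) (natDegree_modByMonic_X_pow_sub_one_lt a hn)
    (natDegree_modByMonic_X_pow_sub_one_lt b hn)

/-- If `g^{⊥q} ∣ g` (where `g·h = xⁿ − 1` and `g^⊥` is the reverse of `h`), then the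
quasi-cyclic code generated by `(g, f·g)` is contained in its Hermitian dual, i.e. it is
Hermitian self-orthogonal. -/
theorem stmt13 {F : Type*} [Field F] [Fintype F] (q n : ℕ) (hn : 0 < n)
    (hq : Fintype.card F = q ^ 2)
    (f g h : Polynomial F) (hgh : g * h = X ^ n - 1)
    (hdvd : qpowPoly q h.reverse ∣ g) :
    ∀ u ∈ Submodule.span F (Set.range fun j : Fin n =>
        Fin.append (vecOf n (X ^ (j : ℕ) * g)) (vecOf n (X ^ (j : ℕ) * (f * g)))),
      ∀ v ∈ Submodule.span F (Set.range fun j : Fin n =>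
        Fin.append (vecOf n (X ^ (j : ℕ) * g)) (vecOf n (X ^ (j : ℕ) * (f * g)))),
        ∑ t, u t ^ q * v t = 0 := by
  obtain ⟨φ, hφ⟩ := FiniteField.exists_ringHom_pow_eq_of_dvd_card (hq ▸ dvd_pow_self q two_ne_zero)
  have hφφ : φ.comp φ = RingHom.id F := RingHom.ext fun x => by
    rw [RingHom.comp_apply, hφ, hφ, ← pow_mul, ← sq, ← hq, FiniteField.pow_card, RingHom.id_apply]
  have hkey := X_pow_sub_one_dvd_map_mul_reverse hφφ hgh (qpowPoly_eq_map hφ h.reverse ▸ hdvd)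
  have hgM : g ∣ X ^ n - 1 := hgh ▸ dvd_mul_right g h
  set gens := Set.range fun j : Fin n =>
    Fin.append (vecOf n (X ^ (j : ℕ) * g)) (vecOf n (X ^ (j : ℕ) * (f * g)))
  have horth : ∀ x ∈ gens, ∀ y ∈ gens, hermitianForm φ _ x y = 0 := by
    rintro _ ⟨j, rfl⟩ _ ⟨k, rfl⟩
    have hfg : ∀ i : ℕ, g ∣ X ^ i * (f * g) := fun i => (dvd_mul_left g f).mul_left _
    rw [hermitianForm_append, hermitianForm_vecOf_eq_zero hn hgM hkey (dvd_mul_left _ _)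
      (dvd_mul_left _ _), hermitianForm_vecOf_eq_zero hn hgM hkey (hfg j) (hfg k), add_zero]
  intro u hu v hv
  simpa only [hermitianForm_apply, hφ] using
    Submodule.span_le_orthogonalBilin_span _ horth hv u hu
end

section
/- (MacWilliams identity) If C is an [n,k] linear code over F_q with weight enumerator W_C(x,y) = Σ_{i=0}^n A_i x^{n−i} y^i, where A_i is the number of codewords of C of Hamming weight i, then the weight enumerator of the Euclidean dual C^⊥ satisfies W_{C^⊥}(x,y) = q^{−k} W_C(x + (q−1)y, x − y). -/
open scoped Classical in
lemma aux_prod_ite {F : Type*} [Field F] (n : ℕ) (v : Fin n → F) (A B : ℂ) :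
    (∏ i, if v i = 0 then A else B)
      = A ^ (n - (Finset.univ.filter fun i => v i ≠ 0).card) *
        B ^ (Finset.univ.filter fun i => v i ≠ 0).card := by
  rw [Finset.prod_ite, Finset.prod_const, Finset.prod_const]
  congr 2
  · have h := Finset.card_filter_add_card_filter_not
      (s := (Finset.univ : Finset (Fin n))) (p := fun i => v i ≠ 0)
    simp only [Finset.card_univ, Fintype.card_fin] at h
    have h2 : (Finset.univ.filter fun i => v i = 0)
        = (Finset.univ.filter fun a => ¬ v a ≠ 0) := by
      apply Finset.filter_congr; intro i _; simp
    rw [h2]; omega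

open scoped Classical in
lemma aux_step1 {F : Type*} [Field F] [Fintype F] (q n : ℕ) (hq : Fintype.card F = q)
    (χ : AddChar F ℂ) (hsum : ∑ t : F, χ t = 0) (X Y : ℂ) (c : Fin n → F) :
    ∑ v : Fin n → F, χ (∑ i, c i * v i) * ∏ i, (if v i = 0 then X else Y)
      = (X + ((q : ℂ) - 1) * Y) ^ (n - (Finset.univ.filter fun i => c i ≠ 0).card) *
        (X - Y) ^ (Finset.univ.filter fun i => c i ≠ 0).card := by
  have hq1 : 1 ≤ q := hq ▸ Fintype.card_pos
  have hmap : ∀ v : Fin n → F, χ (∑ i, c i * v i) = ∏ i, χ (c i * v i) := by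
    intro v
    induction (Finset.univ : Finset (Fin n)) using Finset.cons_induction with
    | empty => simp
    | cons a s ha ih => rw [Finset.sum_cons, Finset.prod_cons, χ.map_add_eq_mul, ih]
  calc ∑ v : Fin n → F, χ (∑ i, c i * v i) * ∏ i, (if v i = 0 then X else Y)
      = ∑ v : Fin n → F, ∏ i, (χ (c i * v i) * if v i = 0 then X else Y) := by
        refine Finset.sum_congr rfl fun v _ => ?_
        rw [hmap v, ← Finset.prod_mul_distrib]
    _ = ∏ i, ∑ t : F, (χ (c i * t) * if t = 0 then X else Y) :=
        (Fintype.prod_sum (f := fun i t => χ (c i * t) * if t = 0 then X else Y)).symm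
    _ = ∏ i, (if c i = 0 then X + ((q : ℂ) - 1) * Y else X - Y) := by
        refine Finset.prod_congr rfl fun i _ => ?_
        by_cases hc : c i = 0
        · simp only [hc, if_pos, zero_mul, χ.map_zero_eq_one, one_mul]
          rw [← Finset.add_sum_erase _ _ (Finset.mem_univ (0 : F))]
          simp only [if_pos rfl]
          congr 1
          have : ∀ t ∈ Finset.univ.erase (0 : F), (if t = 0 then X else Y) = Y := by
            intro t ht; rw [if_neg (Finset.mem_erase.1 ht).1]
          rw [Finset.sum_congr rfl this, Finset.sum_const, Finset.card_erase_of_mem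
            (Finset.mem_univ _), Finset.card_univ, hq, nsmul_eq_mul]
          congr 1
          push_cast [Nat.cast_sub hq1]
          ring
        · rw [if_neg hc]
          have hre : ∑ t : F, (χ (c i * t) * if t = 0 then X else Y)
              = ∑ s : F, (χ s * if s = 0 then X else Y) := by
            apply Fintype.sum_bijective (fun t => c i * t) (mulLeft_bijective₀ _ hc)
            intro t
            simp only [mul_eq_zero, hc, false_or]
          rw [hre, ← Finset.add_sum_erase _ _ (Finset.mem_univ (0 : F))]
          simp only [if_pos rfl, χ.map_zero_eq_one, one_mul]
          have h2 : ∀ s ∈ Finset.univ.erase (0 : F),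
              (χ s * if s = 0 then X else Y) = χ s * Y := by
            intro s hs; rw [if_neg (Finset.mem_erase.1 hs).1]
          rw [Finset.sum_congr rfl h2, ← Finset.sum_mul]
          have h3 : ∑ s ∈ Finset.univ.erase (0 : F), χ s = -1 := by
            have := Finset.add_sum_erase _ (fun s => χ s) (Finset.mem_univ (0 : F))
            rw [hsum] at this
            simp only [χ.map_zero_eq_one] at this
            linear_combination this
          rw [h3]; simp only [if_true]; ring
    _ = _ := by
        rw [show (fun i => if c i = 0 then X + ((q:ℂ)-1)*Y else X - Y)
          = fun i => if c i = 0 then X + ((q:ℂ)-1)*Y else X - Y from rfl]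
        exact aux_prod_ite n c _ _

open scoped Classical in
lemma aux_step2 {F : Type*} [Field F] [Fintype F] (q n k : ℕ) (hq : Fintype.card F = q)
    (C : Submodule F (Fin n → F)) (hk : Module.finrank F C = k)
    (χ : AddChar F ℂ) (a : F) (hχa : χ a ≠ 1) (v : Fin n → F) :
    ∑ c : C, χ (∑ i, (c : Fin n → F) i * v i)
      = if (∀ u ∈ C, ∑ i, u i * v i = 0) then ((q : ℂ)) ^ k else 0 := by
  split_ifs with hP
  · have h1 : ∀ c : C, χ (∑ i, (c : Fin n → F) i * v i) = 1 := by
      intro c; rw [hP c.1 c.2, χ.map_zero_eq_one]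
    rw [Finset.sum_congr rfl fun c _ => h1 c, Finset.sum_const, Finset.card_univ,
      Module.card_eq_pow_finrank (K := F) (V := C), hq, hk, nsmul_eq_mul, mul_one]
    push_cast; ring
  · push_neg at hP
    obtain ⟨u0, hu0C, ht0⟩ := hP
    set φ : C → F := fun c => ∑ i, (c : Fin n → F) i * v i with hφ
    set t0 : F := ∑ i, u0 i * v i with ht0def
    set u1 : C := ⟨(a * t0⁻¹) • u0, C.smul_mem _ hu0C⟩ with hu1
    have hφadd : ∀ c d : C, φ (c + d) = φ c + φ d := by
      intro c d
      simp only [hφ, Submodule.coe_add, Pi.add_apply, add_mul, Finset.sum_add_distrib]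
    have hφu1 : φ u1 = a := by
      simp only [hφ, hu1, Pi.smul_apply, smul_eq_mul, mul_assoc, ← Finset.mul_sum]
      rw [inv_mul_cancel₀ ht0, mul_one]
    have hshift : χ a * ∑ c : C, χ (φ c) = ∑ c : C, χ (φ c) := by
      rw [Finset.mul_sum]
      refine Fintype.sum_equiv (Equiv.addLeft u1) _ _ fun c => ?_
      rw [Equiv.coe_addLeft, hφadd, hφu1, χ.map_add_eq_mul]
    have hne : χ a - 1 ≠ 0 := sub_ne_zero.mpr hχa
    have : (χ a - 1) * ∑ c : C, χ (φ c) = 0 := by linear_combination hshift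
    exact (mul_eq_zero.mp this).resolve_left hne



open scoped Classical in
/-- MacWilliams identity: the weight enumerator of the Euclidean dual of an `[n,k]` code
`C` over `F_q` satisfies `W_{C^⊥}(x,y) = q^{-k} · W_C(x + (q−1)y, x − y)`. -/
theorem stmt14 {F : Type*} [Field F] [Fintype F] (q n k : ℕ)
    (hq : Fintype.card F = q)
    (C : Submodule F (Fin n → F)) (hk : Module.finrank F C = k) (x y : ℚ) :
    ∑ v : {v : Fin n → F // ∀ u ∈ C, ∑ i, u i * v i = 0},
        x ^ (n - (Finset.univ.filter fun i => v.1 i ≠ 0).card) *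
          y ^ (Finset.univ.filter fun i => v.1 i ≠ 0).card
      = ((q : ℚ) ^ k)⁻¹ *
        ∑ c : C,
          (x + (q - 1) * y) ^ (n - (Finset.univ.filter fun i => (c : Fin n → F) i ≠ 0).card) *
            (x - y) ^ (Finset.univ.filter fun i => (c : Fin n → F) i ≠ 0).card := by
  have hq1 : 1 ≤ q := hq ▸ Fintype.card_pos
  have hq0 : (q : ℚ) ≠ 0 := by positivity
  obtain ⟨a, ha⟩ := exists_ne (0 : F)
  obtain ⟨χ, hχ⟩ := (AddChar.exists_apply_ne_zero (a := a)).mpr ha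
  have h0 : χ ≠ 0 := AddChar.ne_zero_iff.mpr ⟨a, hχ⟩
  have hsum : ∑ t : F, χ t = 0 := AddChar.sum_eq_zero_iff_ne_zero.mpr h0
  set X : ℂ := (x : ℂ)
  set Y : ℂ := (y : ℂ)
  have key : ∑ c : C,
      ((X + ((q : ℂ) - 1) * Y) ^ (n - (Finset.univ.filter fun i => (c : Fin n → F) i ≠ 0).card) *
        (X - Y) ^ (Finset.univ.filter fun i => (c : Fin n → F) i ≠ 0).card)
      = (q : ℂ) ^ k * ∑ v : {v : Fin n → F // ∀ u ∈ C, ∑ i, u i * v i = 0},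
          X ^ (n - (Finset.univ.filter fun i => v.1 i ≠ 0).card) *
            Y ^ (Finset.univ.filter fun i => v.1 i ≠ 0).card := by
    calc ∑ c : C, ((X + ((q : ℂ) - 1) * Y) ^ (n - (Finset.univ.filter
            fun i => (c : Fin n → F) i ≠ 0).card) *
          (X - Y) ^ (Finset.univ.filter fun i => (c : Fin n → F) i ≠ 0).card)
        = ∑ c : C, ∑ v : Fin n → F,
            χ (∑ i, (c : Fin n → F) i * v i) * ∏ i, (if v i = 0 then X else Y) := by
          exact Finset.sum_congr rfl fun c _ => (aux_step1 q n hq χ hsum X Y _).symm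
      _ = ∑ v : Fin n → F, ∑ c : C,
            χ (∑ i, (c : Fin n → F) i * v i) * ∏ i, (if v i = 0 then X else Y) :=
          Finset.sum_comm
      _ = ∑ v : Fin n → F, (if (∀ u ∈ C, ∑ i, u i * v i = 0) then (q : ℂ) ^ k else 0) *
            ∏ i, (if v i = 0 then X else Y) := by
          refine Finset.sum_congr rfl fun v _ => ?_
          rw [← Finset.sum_mul, aux_step2 q n k hq C hk χ a hχ v]
      _ = ∑ v ∈ Finset.univ.filter (fun v : Fin n → F => ∀ u ∈ C, ∑ i, u i * v i = 0),
            (q : ℂ) ^ k * ∏ i, (if v i = 0 then X else Y) := by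
          rw [Finset.sum_filter]
          exact Finset.sum_congr rfl fun v _ => by rw [ite_mul, zero_mul]
      _ = (q : ℂ) ^ k * ∑ v : {v : Fin n → F // ∀ u ∈ C, ∑ i, u i * v i = 0},
            X ^ (n - (Finset.univ.filter fun i => v.1 i ≠ 0).card) *
              Y ^ (Finset.univ.filter fun i => v.1 i ≠ 0).card := by
          rw [← Finset.mul_sum]
          congr 1
          refine Finset.sum_bij
            (fun v hv => (⟨v, by simpa using hv⟩ :
              {v : Fin n → F // ∀ u ∈ C, ∑ i, u i * v i = 0}))
            (fun _ _ => Finset.mem_univ _)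
            (fun a₁ ha₁ a₂ ha₂ h => by simpa [Subtype.mk_eq_mk] using h)
            (fun b _ => ⟨b.1, by simpa using b.2, rfl⟩)
            (fun v hv => aux_prod_ite n v X Y)
  rw [eq_inv_mul_iff_mul_eq₀ (by positivity)]
  have hinj : Function.Injective ((↑) : ℚ → ℂ) := Rat.cast_injective
  apply hinj
  push_cast
  exact key.symm
end

section
/- (Extended construction rank count) Let G = (G_1 | G_2) be a k×2n generator matrix over F_{q^2} with rank(G G^†) = k (i.e., G G^† nonsingular). Suppose x^{(1)}, x^{(2)} ∈ F_{q^2}^n satisfy G_1 (x^{(1)})^† = 0, G_2 (x^{(2)})^† = 0, and x^{(i)}(x^{(i)})^† + α_i^{q+1} ≠ 0 for nonzero α_1, α_2 ∈ F_{q^2}. Then the (k+2)×(2n+2) matrix G'' with rows (G_1 | G_2 | 0 | 0), (x^{(1)} | 0 | α_1 | 0), (0 | x^{(2)} | 0 | α_2) satisfies rank(G'' (G'')^†) = k + 2. -/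
open Matrix Finset

private lemma aux_frob {F : Type*} [Field F] [Fintype F] (q : ℕ) (hq : Fintype.card F = q ^ 2) :
    ∃ φ : F →+* F, ∀ x, φ x = x ^ q := by
  obtain ⟨p, hp⟩ := CharP.exists F
  haveI := hp
  obtain ⟨r, hpr, hcard⟩ := FiniteField.card F p
  haveI := Fact.mk hpr
  have hdvd : q ∣ p ^ (r : ℕ) := by
    refine Dvd.intro q ?_
    rw [← hcard, hq, sq]
  obtain ⟨m, _, rfl⟩ := (Nat.dvd_prime_pow hpr).1 hdvd
  exact ⟨iterateFrobenius F p m, fun x => by simp [iterateFrobenius_def]⟩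

private lemma aux_unit {K : Type*} [Field K] {k : ℕ} (A : Matrix (Fin k) (Fin k) K)
    (h : A.rank = k) : IsUnit A.det := by
  have hr : LinearMap.range A.mulVecLin = ⊤ := by
    apply Submodule.eq_top_of_finrank_eq
    rw [← Matrix.rank, h, Module.finrank_fintype_fun_eq_card, Fintype.card_fin]
  have hsurj : Function.Surjective A.mulVecLin := LinearMap.range_eq_top.1 hr
  have hinj := (LinearMap.injective_iff_surjective (f := A.mulVecLin)).2 hsurj
  let e := LinearEquiv.ofBijective A.mulVecLin ⟨hinj, hsurj⟩
  have := LinearEquiv.isUnit_det' e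
  rwa [show (e : (Fin k → K) →ₗ[K] (Fin k → K)) = A.mulVecLin from rfl,
    show A.mulVecLin = Matrix.toLin' A from rfl, LinearMap.det_toLin'] at this

private lemma aux_det_last {R : Type*} [CommRing R] {m : ℕ}
    (A : Matrix (Fin (m + 1)) (Fin (m + 1)) R)
    (h : ∀ j : Fin m, A (Fin.last m) j.castSucc = 0) :
    A.det = A (Fin.last m) (Fin.last m) * (A.submatrix Fin.castSucc Fin.castSucc).det := by
  rw [Matrix.det_succ_row A (Fin.last m), Fin.sum_univ_castSucc]
  simp only [h, Fin.succAbove_last, mul_zero, zero_mul, sum_const_zero, zero_add, Fin.val_last]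
  rw [show ((-1 : R) ^ (m + m) : R) = 1 from Even.neg_one_pow ⟨m, rfl⟩, one_mul]

/-- Extended-construction rank count: if `rank(GG†) = k` for `G = (G₁ | G₂)`,
`G₁(x¹)† = 0`, `G₂(x²)† = 0` and `xⁱ(xⁱ)† + αᵢ^{q+1} ≠ 0` with `αᵢ ≠ 0`, then the
extended matrix `G''` with rows `(G₁ | G₂ | 0 | 0)`, `(x¹ | 0 | α₁ | 0)`,
`(0 | x² | 0 | α₂)` satisfies `rank(G''(G'')†) = k + 2`. -/
theorem stmt18 {F : Type*} [Field F] [Fintype F] (q n k : ℕ)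
    (hq : Fintype.card F = q ^ 2)
    (G1 G2 : Matrix (Fin k) (Fin n) F) (x1 x2 : Fin n → F) (α1 α2 : F)
    (hα1 : α1 ≠ 0) (hα2 : α2 ≠ 0)
    (hG : ((Matrix.of fun i => Fin.append (G1 i) (G2 i)) *
        dag q (Matrix.of fun i => Fin.append (G1 i) (G2 i))).rank = k)
    (hx1 : ∀ i, ∑ t, G1 i t * x1 t ^ q = 0)
    (hx2 : ∀ i, ∑ t, G2 i t * x2 t ^ q = 0)
    (hne1 : (∑ t, x1 t * x1 t ^ q) + α1 ^ (q + 1) ≠ 0)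
    (hne2 : (∑ t, x2 t * x2 t ^ q) + α2 ^ (q + 1) ≠ 0) :
    ((Matrix.of (Fin.snoc (Fin.snoc (fun i : Fin k =>
            Fin.snoc (Fin.snoc (Fin.append (G1 i) (G2 i)) (0 : F)) (0 : F))
          (Fin.snoc (Fin.snoc (Fin.append x1 (0 : Fin n → F)) α1) (0 : F)))
          (Fin.snoc (Fin.snoc (Fin.append (0 : Fin n → F) x2) (0 : F)) α2) :
        Fin (k + 1 + 1) → Fin (n + n + 1 + 1) → F)) *
      dag q (Matrix.of (Fin.snoc (Fin.snoc (fun i : Fin k =>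
            Fin.snoc (Fin.snoc (Fin.append (G1 i) (G2 i)) (0 : F)) (0 : F))
          (Fin.snoc (Fin.snoc (Fin.append x1 (0 : Fin n → F)) α1) (0 : F)))
          (Fin.snoc (Fin.snoc (Fin.append (0 : Fin n → F) x2) (0 : F)) α2) :
        Fin (k + 1 + 1) → Fin (n + n + 1 + 1) → F))).rank = k + 2 := by
  classical
  have hq0 : q ≠ 0 := by
    rintro rfl
    have := Fintype.one_lt_card (α := F)
    omega
  obtain ⟨φ, hφ⟩ := aux_frob q hq
  have hq2 : ∀ a : F, (a ^ q) ^ q = a := fun a => by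
    rw [← pow_mul, ← sq, ← hq]; exact FiniteField.pow_card a
  set A : Matrix (Fin (k + 1 + 1)) (Fin (n + n + 1 + 1)) F :=
    (Matrix.of (Fin.snoc (Fin.snoc (fun i : Fin k =>
            Fin.snoc (Fin.snoc (Fin.append (G1 i) (G2 i)) (0 : F)) (0 : F))
          (Fin.snoc (Fin.snoc (Fin.append x1 (0 : Fin n → F)) α1) (0 : F)))
          (Fin.snoc (Fin.snoc (Fin.append (0 : Fin n → F) x2) (0 : F)) α2) :
        Fin (k + 1 + 1) → Fin (n + n + 1 + 1) → F)) with hA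
  set G : Matrix (Fin k) (Fin (n + n)) F :=
    (Matrix.of fun i => Fin.append (G1 i) (G2 i)) with hGdef
  -- row descriptions
  have hrow0 : ∀ (i : Fin k) t, A (Fin.castSucc (Fin.castSucc i)) t =
      (Fin.snoc (Fin.snoc (Fin.append (G1 i) (G2 i)) (0 : F)) (0 : F) :
        Fin (n + n + 1 + 1) → F) t := by
    intro i t; simp [hA]
  have hrow1 : ∀ t, A (Fin.castSucc (Fin.last k)) t =
      (Fin.snoc (Fin.snoc (Fin.append x1 (0 : Fin n → F)) α1) (0 : F) :
        Fin (n + n + 1 + 1) → F) t := by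
    intro t; simp [hA]
  have hrow2 : ∀ t, A (Fin.last (k + 1)) t =
      (Fin.snoc (Fin.snoc (Fin.append (0 : Fin n → F) x2) (0 : F)) α2 :
        Fin (n + n + 1 + 1) → F) t := by
    intro t; simp [hA]
  have hMe : ∀ r s : Fin (k + 1 + 1), (A * dag q A) r s = ∑ t, A r t * A s t ^ q := by
    intro r s; rw [Matrix.mul_apply]; rfl
  -- inner product of two snoc-snoc rows
  have hip : ∀ (u v : Fin (n + n) → F) (c d e f : F),
      (∑ t : Fin (n + n + 1 + 1),
          Fin.snoc (Fin.snoc u c) d t * Fin.snoc (Fin.snoc v e) f t ^ q)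
        = (∑ t : Fin (n + n), u t * v t ^ q) + c * e ^ q + d * f ^ q := by
    intro u v c d e f
    rw [Fin.sum_univ_castSucc, Fin.sum_univ_castSucc]
    simp
  have happ : ∀ (a b c d : Fin n → F),
      (∑ t : Fin (n + n), Fin.append a b t * Fin.append c d t ^ q)
        = (∑ t, a t * c t ^ q) + ∑ t, b t * d t ^ q := by
    intro a b c d
    rw [Fin.sum_univ_add]
    congr 1
    · exact Finset.sum_congr rfl fun t _ => by simp only [Fin.append_left]
    · exact Finset.sum_congr rfl fun t _ => by simp only [Fin.append_right]
  -- conjugated orthogonality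
  have hx1' : ∀ i, ∑ t, x1 t * G1 i t ^ q = 0 := by
    intro i
    have h0 : φ (∑ t, G1 i t * x1 t ^ q) = 0 := by rw [hx1 i, map_zero]
    rw [map_sum] at h0
    simp only [hφ, mul_pow, hq2] at h0
    calc (∑ t, x1 t * G1 i t ^ q) = ∑ t, G1 i t ^ q * x1 t := by
          exact Finset.sum_congr rfl fun t _ => mul_comm _ _
      _ = 0 := h0
  have hx2' : ∀ i, ∑ t, x2 t * G2 i t ^ q = 0 := by
    intro i
    have h0 : φ (∑ t, G2 i t * x2 t ^ q) = 0 := by rw [hx2 i, map_zero]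
    rw [map_sum] at h0
    simp only [hφ, mul_pow, hq2] at h0
    calc (∑ t, x2 t * G2 i t ^ q) = ∑ t, G2 i t ^ q * x2 t := by
          exact Finset.sum_congr rfl fun t _ => mul_comm _ _
      _ = 0 := h0
  set M := A * dag q A with hM
  -- last row of M vanishes off the diagonal
  have hlast : ∀ j : Fin (k + 1), M (Fin.last (k + 1)) j.castSucc = 0 := by
    intro j
    rw [hMe]
    refine Fin.lastCases ?_ ?_ j
    · -- j = last : row2 vs row1
      have : (∑ t, A (Fin.last (k + 1)) t * A (Fin.castSucc (Fin.last k)) t ^ q)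
          = (∑ t : Fin (n + n), Fin.append (0 : Fin n → F) x2 t *
              Fin.append x1 (0 : Fin n → F) t ^ q) + 0 * α1 ^ q + α2 * 0 ^ q := by
        rw [← hip]
        exact Finset.sum_congr rfl fun t _ => by rw [hrow2, hrow1]
      rw [this, happ]
      simp [zero_pow hq0]
    · -- j = castSucc i : row2 vs row0 i
      intro i
      have : (∑ t, A (Fin.last (k + 1)) t * A (Fin.castSucc (Fin.castSucc i)) t ^ q)
          = (∑ t : Fin (n + n), Fin.append (0 : Fin n → F) x2 t *
              Fin.append (G1 i) (G2 i) t ^ q) + 0 * 0 ^ q + α2 * 0 ^ q := by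
        rw [← hip]
        exact Finset.sum_congr rfl fun t _ => by rw [hrow2, hrow0]
      rw [this, happ]
      simp [zero_pow hq0, hx2' i]
  set M1 := M.submatrix Fin.castSucc Fin.castSucc with hM1
  have hlast1 : ∀ j : Fin k, M1 (Fin.last k) j.castSucc = 0 := by
    intro j
    show M (Fin.castSucc (Fin.last k)) (Fin.castSucc (Fin.castSucc j)) = 0
    rw [hMe]
    have : (∑ t, A (Fin.castSucc (Fin.last k)) t * A (Fin.castSucc (Fin.castSucc j)) t ^ q)
        = (∑ t : Fin (n + n), Fin.append x1 (0 : Fin n → F) t *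
            Fin.append (G1 j) (G2 j) t ^ q) + α1 * 0 ^ q + 0 * 0 ^ q := by
      rw [← hip]
      exact Finset.sum_congr rfl fun t _ => by rw [hrow1, hrow0]
    rw [this, happ]
    simp [zero_pow hq0, hx1' j]
  -- the top-left block is G Gdag
  have hB : M1.submatrix Fin.castSucc Fin.castSucc = G * dag q G := by
    ext i j
    show M (Fin.castSucc (Fin.castSucc i)) (Fin.castSucc (Fin.castSucc j)) = _
    rw [hMe]
    have : (∑ t, A (Fin.castSucc (Fin.castSucc i)) t * A (Fin.castSucc (Fin.castSucc j)) t ^ q)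
        = (∑ t : Fin (n + n), Fin.append (G1 i) (G2 i) t *
            Fin.append (G1 j) (G2 j) t ^ q) + 0 * 0 ^ q + 0 * 0 ^ q := by
      rw [← hip]
      exact Finset.sum_congr rfl fun t _ => by rw [hrow0, hrow0]
    rw [this]
    rw [Matrix.mul_apply]
    simp [hGdef, dag]
  -- diagonal entries
  have hd2 : M (Fin.last (k + 1)) (Fin.last (k + 1)) = (∑ t, x2 t * x2 t ^ q) + α2 ^ (q + 1) := by
    rw [hMe]
    have : (∑ t, A (Fin.last (k + 1)) t * A (Fin.last (k + 1)) t ^ q)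
        = (∑ t : Fin (n + n), Fin.append (0 : Fin n → F) x2 t *
            Fin.append (0 : Fin n → F) x2 t ^ q) + 0 * 0 ^ q + α2 * α2 ^ q := by
      rw [← hip]
      exact Finset.sum_congr rfl fun t _ => by rw [hrow2]
    rw [this, happ]
    have : α2 * α2 ^ q = α2 ^ (q + 1) := by rw [pow_succ, mul_comm]
    simp [zero_pow hq0, this]
  have hd1 : M1 (Fin.last k) (Fin.last k) = (∑ t, x1 t * x1 t ^ q) + α1 ^ (q + 1) := by
    show M (Fin.castSucc (Fin.last k)) (Fin.castSucc (Fin.last k)) = _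
    rw [hMe]
    have : (∑ t, A (Fin.castSucc (Fin.last k)) t * A (Fin.castSucc (Fin.last k)) t ^ q)
        = (∑ t : Fin (n + n), Fin.append x1 (0 : Fin n → F) t *
            Fin.append x1 (0 : Fin n → F) t ^ q) + α1 * α1 ^ q + 0 * 0 ^ q := by
      rw [← hip]
      exact Finset.sum_congr rfl fun t _ => by rw [hrow1]
    rw [this, happ]
    have : α1 * α1 ^ q = α1 ^ (q + 1) := by rw [pow_succ, mul_comm]
    simp [zero_pow hq0, this]
  -- determinant computation
  have hdet : M.det = M (Fin.last (k + 1)) (Fin.last (k + 1)) *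
      (M1 (Fin.last k) (Fin.last k) * (G * dag q G).det) := by
    rw [aux_det_last M hlast, ← hM1, aux_det_last M1 hlast1, hB]
  have hBu : IsUnit (G * dag q G).det := aux_unit _ hG
  have hMu : IsUnit M.det := by
    rw [hdet, hd2, hd1]
    exact (Ne.isUnit hne2).mul ((Ne.isUnit hne1).mul hBu)
  rw [Matrix.rank_of_isUnit M ((Matrix.isUnit_iff_isUnit_det M).2 hMu), Fintype.card_fin]
end

section
/- Let C ⊆ F_{q^2}^n be a linear code of dimension k with Hull_h(C) = 0 (trivial Hermitian hull). Then for any generator matrix G of C, the k×k matrix G G^† is invertible. -/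
open Matrix in
/-- If a `k`-dimensional code `C` over `F_{q²}` has trivial Hermitian hull, then for any
generator matrix `G` of `C` the `k × k` matrix `GG†` is invertible. -/
theorem stmt19 {F : Type*} [Field F] [Fintype F] (q n k : ℕ)
    (hq : Fintype.card F = q ^ 2)
    (C : Submodule F (Fin n → F)) (hk : Module.finrank F C = k)
    (hHull : C ⊓ hermDualSub q C = ⊥)
    (G : Matrix (Fin k) (Fin n) F)
    (hG : Submodule.span F (Set.range fun i => G i) = C)
    (hGli : LinearIndependent F fun i => G i) :
    IsUnit (G * dag q G) := by

  classical
  have hq0 : q ≠ 0 := by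
    rintro rfl
    have := Fintype.card_pos (α := F)
    simp [hq] at this
  -- Frobenius `x ↦ x ^ q` is additive
  have hadd : ∀ a b : F, (a + b) ^ q = a ^ q + b ^ q := by
    obtain ⟨p, hp⟩ := CharP.exists F
    haveI := hp
    have hpprime : p.Prime := CharP.char_is_prime F p
    haveI := Fact.mk hpprime
    obtain ⟨d, _, hd⟩ := FiniteField.card F p
    have hdvd : q ∣ p ^ (d : ℕ) := by
      rw [← hd, hq]; exact ⟨q, (sq q)⟩
    obtain ⟨e, he, rfl⟩ := (Nat.dvd_prime_pow hpprime).1 hdvd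
    haveI : ExpChar F p := ExpChar.prime hpprime
    intro a b
    exact add_pow_char_pow a b p e
  set φ : F →+* F :=
    { toFun := fun x => x ^ q
      map_one' := one_pow q
      map_mul' := fun a b => mul_pow a b q
      map_zero' := zero_pow hq0
      map_add' := hadd } with hφ
  rw [Matrix.isUnit_iff_isUnit_det, isUnit_iff_ne_zero]
  intro hdet
  obtain ⟨v, hvne, hv⟩ := Matrix.exists_vecMul_eq_zero_iff.2 hdet
  set c : Fin n → F := v ᵥ* G with hc
  have hsum : c = ∑ i, v i • G i := by
    funext j
    simp [hc, Matrix.vecMul, dotProduct, Finset.sum_apply]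
  have hcC : c ∈ C := by
    rw [← hG, hsum]
    exact Submodule.sum_mem _ fun i _ =>
      Submodule.smul_mem _ _ (Submodule.subset_span ⟨i, rfl⟩)
  have hjc : ∀ j, ∑ l, G j l ^ q * c l = 0 := by
    intro j
    have h1 : (c ᵥ* dag q G) j = 0 := by
      rw [hc, Matrix.vecMul_vecMul, hv]; rfl
    have h2 : (c ᵥ* dag q G) j = ∑ l, G j l ^ q * c l := by
      simp [Matrix.vecMul, dotProduct, dag, mul_comm]
    rw [← h2, h1]
  have hcD : c ∈ hermDualSub q C := by
    intro u hu
    rw [← hG] at hu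
    obtain ⟨m, hm⟩ := (Submodule.mem_span_range_iff_exists_fun F).1 hu
    calc ∑ l, u l ^ q * c l = ∑ l, (∑ j, m j * G j l) ^ q * c l := by
          rw [← hm]; simp [Finset.sum_apply]
      _ = ∑ l, (∑ j, m j ^ q * G j l ^ q) * c l := by
          refine Finset.sum_congr rfl fun l _ => ?_
          congr 1
          calc (∑ j, m j * G j l) ^ q = φ (∑ j, m j * G j l) := rfl
            _ = ∑ j, φ (m j * G j l) := map_sum φ _ _
            _ = ∑ j, m j ^ q * G j l ^ q := by
                refine Finset.sum_congr rfl fun j _ => ?_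
                show (m j * G j l) ^ q = _
                rw [mul_pow]
      _ = ∑ j, m j ^ q * ∑ l, G j l ^ q * c l := by
          simp only [Finset.sum_mul, Finset.mul_sum, mul_assoc]
          exact Finset.sum_comm
      _ = 0 := by simp [hjc]
  have hc0 : c = 0 := by
    have : c ∈ C ⊓ hermDualSub q C := ⟨hcC, hcD⟩
    rwa [hHull, Submodule.mem_bot] at this
  have hv0 : v = 0 := by
    have h0 : ∑ i, v i • G i = 0 := by rw [← hsum, hc0]
    funext i
    exact Fintype.linearIndependent_iff.1 hGli v h0 i
  exact hvne hv0
end
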